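/- arXiv:2604.16583 — 7 statements merged into one kernel-verified Lean document; each statement's English description precedes it below -/
import Mathlib

section
/- On the event that |x_t^T(θ̂_{a,t} − θ_a^*)| ≤ β_t·√(x_t^T V_{a,t}^{-1} x_t) holds for all arms a and rounds t ≤ T, and with ridge parameter λ ≥ 1, the cache-aware LinUCB routing rule satisfies Σ_{t=1}^T [max_{a∈M} μ_t(a; C_{ℓ(t)}) − μ_t(a_t; C_{ℓ(t)})] ≤ 2·β_T·√(2NdT·log(1 + T/(dλ))). -/
open Finset
open scoped RealInnerProductSpace Matrix

section Helpers

lemma psd_vecMulVec {d : ℕ} (x : Fin d → ℝ) : (Matrix.vecMulVec x x).PosSemidef := by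
  rw [Matrix.vecMulVec_eq (Fin 1)]
  have h := Matrix.posSemidef_conjTranspose_mul_self (Matrix.replicateRow (Fin 1) x)
  convert h using 1
  ext i j
  simp [Matrix.conjTranspose_replicateRow, Matrix.mul_apply]

lemma psd_sum {d : ℕ} {ι : Type*} (s : Finset ι) (f : ι → Matrix (Fin d) (Fin d) ℝ)
    (h : ∀ i ∈ s, (f i).PosSemidef) : (∑ i ∈ s, f i).PosSemidef := by
  classical
  induction s using Finset.induction_on with
  | empty => simpa using Matrix.PosSemidef.zero
  | insert _ _ hni ih =>
    rename_i a s'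
    rw [Finset.sum_insert hni]
    exact (h a (Finset.mem_insert_self _ _)).add
      (ih fun i hi => h i (Finset.mem_insert_of_mem hi))

lemma posdef_smul_one_add {d : ℕ} (lam : ℝ) (hlam : 0 < lam)
    (S : Matrix (Fin d) (Fin d) ℝ) (hS : S.PosSemidef) :
    (lam • (1 : Matrix (Fin d) (Fin d) ℝ) + S).PosDef := by
  have h1 : (lam • (1 : Matrix (Fin d) (Fin d) ℝ)).PosDef := by
    refine Matrix.PosDef.of_dotProduct_mulVec_pos ?_ ?_
    · simp [Matrix.IsHermitian, Matrix.conjTranspose_smul]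
    · intro v hv
      have : 0 < dotProduct (star v) v := by
        simpa [star_trivial] using Matrix.dotProduct_star_self_pos_iff.mpr hv
      simp only [Matrix.smul_mulVec, Matrix.one_mulVec, dotProduct_smul]
      exact mul_pos hlam this
  exact h1.add_posSemidef hS

lemma det_step {d : ℕ} (M : Matrix (Fin d) (Fin d) ℝ) (hM : M.PosDef) (x : Fin d → ℝ) :
    (M + Matrix.vecMulVec x x).det = M.det * (1 + x ⬝ᵥ (M⁻¹ *ᵥ x)) := by
  have hU : IsUnit M.det := hM.det_pos.ne'.isUnit
  rw [Matrix.vecMulVec_eq Unit, Matrix.det_add_replicateCol_mul_replicateRow hU,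
    Matrix.det_unique (1 + Matrix.replicateRow Unit x * M⁻¹ * Matrix.replicateCol Unit x)]
  congr 1
  simp only [Matrix.add_apply, Matrix.one_apply_eq, Matrix.mul_apply, Matrix.replicateRow_apply,
    Matrix.replicateCol_apply, Matrix.mulVec, dotProduct, Finset.sum_mul, Finset.mul_sum]
  congr 1
  rw [Finset.sum_comm]
  refine Finset.sum_congr rfl fun i _ => Finset.sum_congr rfl fun j _ => ?_
  ring

lemma quad_nonneg {d : ℕ} {M : Matrix (Fin d) (Fin d) ℝ} (hM : M.PosDef) (x : Fin d → ℝ) :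
    0 ≤ x ⬝ᵥ (M⁻¹ *ᵥ x) := by
  have h := hM.inv.posSemidef.dotProduct_mulVec_nonneg x
  simpa [star_trivial] using h

lemma quad_le_one {d : ℕ} (lam : ℝ) (hlam : 1 ≤ lam)
    (S : Matrix (Fin d) (Fin d) ℝ) (hS : S.PosSemidef)
    {M : Matrix (Fin d) (Fin d) ℝ} (hMdef : M = lam • (1 : Matrix (Fin d) (Fin d) ℝ) + S)
    (x : Fin d → ℝ) (hx1 : x ⬝ᵥ x ≤ 1) :
    x ⬝ᵥ (M⁻¹ *ᵥ x) ≤ 1 := by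
  have hM : M.PosDef := by
    rw [hMdef]; exact posdef_smul_one_add lam (by linarith) S hS
  set y := M⁻¹ *ᵥ x with hy
  have hMy : M *ᵥ y = x := by
    rw [hy, Matrix.mulVec_mulVec, Matrix.mul_nonsing_inv _ hM.det_pos.ne'.isUnit,
      Matrix.one_mulVec]
  set q := x ⬝ᵥ y with hqdef
  have hq0 : 0 ≤ q := quad_nonneg hM x
  have h1 : q = y ⬝ᵥ (M *ᵥ y) := by
    conv_lhs => rw [hqdef, ← hMy]
    exact dotProduct_comm _ _
  have hSy : 0 ≤ y ⬝ᵥ (S *ᵥ y) := by simpa [star_trivial] using hS.dotProduct_mulVec_nonneg y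
  have h2 : lam * (y ⬝ᵥ y) ≤ q := by
    rw [h1, hMdef, Matrix.add_mulVec, dotProduct_add, Matrix.smul_mulVec,
      Matrix.one_mulVec, dotProduct_smul]
    simp only [smul_eq_mul]
    linarith
  have hyy : 0 ≤ y ⬝ᵥ y := by
    simpa [dotProduct] using Finset.sum_nonneg fun i _ => mul_self_nonneg (y i)
  have hxx : 0 ≤ x ⬝ᵥ x := by
    simpa [dotProduct] using Finset.sum_nonneg fun i _ => mul_self_nonneg (x i)
  have hcs : q ^ 2 ≤ (x ⬝ᵥ x) * (y ⬝ᵥ y) := by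
    have := Finset.sum_mul_sq_le_sq_mul_sq Finset.univ x y
    simpa [dotProduct, sq, hqdef] using this
  nlinarith [hcs, h2, hq0, hyy, hxx, hx1, hlam]

lemma trace_eq_sum_eig {d : ℕ} {A : Matrix (Fin d) (Fin d) ℝ} (hA : A.IsHermitian) :
    A.trace = ∑ i, hA.eigenvalues i := by
  simpa using hA.trace_eq_sum_eigenvalues

lemma det_le_pow_trace {d : ℕ} (hd : 0 < d) {A : Matrix (Fin d) (Fin d) ℝ}
    (hA : A.PosDef) : A.det ≤ (A.trace / d) ^ d := by
  have heig := hA.eigenvalues_pos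
  have hdr : (0:ℝ) < d := by exact_mod_cast hd
  have hsum : ∑ i : Fin d, (d:ℝ)⁻¹ = 1 := by
    simp [Finset.sum_const]
    field_simp
  have hgm := Real.geom_mean_le_arith_mean_weighted Finset.univ (fun _ => (d:ℝ)⁻¹)
    (fun i => hA.1.eigenvalues i) (fun _ _ => by positivity) hsum
    (fun i _ => (heig i).le)
  have htr : ∑ i, (d:ℝ)⁻¹ * hA.1.eigenvalues i = A.trace / d := by
    rw [← Finset.mul_sum, trace_eq_sum_eig hA.1]
    field_simp
  have hG0 : 0 ≤ ∏ i, hA.1.eigenvalues i ^ ((d:ℝ)⁻¹) :=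
    Finset.prod_nonneg fun i _ => Real.rpow_nonneg (heig i).le _
  have hpow := pow_le_pow_left₀ hG0 (htr ▸ hgm) d
  have hGd : (∏ i, hA.1.eigenvalues i ^ ((d:ℝ)⁻¹)) ^ d = ∏ i, hA.1.eigenvalues i := by
    rw [← Finset.prod_pow]
    refine Finset.prod_congr rfl fun i _ => ?_
    rw [← Real.rpow_natCast (hA.1.eigenvalues i ^ ((d:ℝ)⁻¹)) d, ← Real.rpow_mul (heig i).le]
    rw [inv_mul_cancel₀ hdr.ne', Real.rpow_one]
  rw [hGd] at hpow
  calc A.det = ∏ i, hA.1.eigenvalues i := by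
        rw [hA.1.det_eq_prod_eigenvalues]; simp
    _ ≤ (A.trace / d) ^ d := hpow

lemma le_two_log {w : ℝ} (h0 : 0 ≤ w) (h1 : w ≤ 1) : w ≤ 2 * Real.log (1 + w) := by
  have hpos : (0:ℝ) < 1 + w := by linarith
  have hlog := Real.log_le_sub_one_of_pos (inv_pos.mpr hpos)
  rw [Real.log_inv] at hlog
  have h4 : (1 + w)⁻¹ * (1 + w) = 1 := inv_mul_cancel₀ hpos.ne'
  have hu0 : 0 ≤ (1 + w)⁻¹ := by positivity
  nlinarith [hlog, h4, hu0]

end Helpers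

/-- **Routing regret of cache-aware LinUCB on the confidence event.**
Suppose the confidence event `|x_tᵀ(θ̂_{a,t} − θ_a^*)| ≤ β_t √(x_tᵀ V_{a,t}⁻¹ x_t)` holds
for all arms `a` and rounds `t ≤ T`, where `V_{a,t} = λ I + Σ_{s<t} 1{a_s=a} x_s x_sᵀ`
with ridge `λ ≥ 1`, `β` is nonnegative and nondecreasing, and at every round the played
arm maximizes the cache-aware UCB score. Then the cumulative routing regret against the
per-round best arm under the same cache is at most `2 β_T √(2NdT log(1 + T/(dλ)))`. -/
theorem cache_aware_linucb_routing_regret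
    (N d T : ℕ) (hN : 0 < N) (hd : 0 < d)
    (lam : ℝ) (hlam : 1 ≤ lam)
    (α : ℝ) (hα : 0 < α) (lat : Fin N → ℝ) (hlat : ∀ a, 0 < lat a)
    (x : ℕ → EuclideanSpace ℝ (Fin d)) (hx : ∀ t, ‖x t‖ ≤ 1)
    (θstar : Fin N → EuclideanSpace ℝ (Fin d)) (hθ : ∀ a, ‖θstar a‖ ≤ 1)
    (Arm : ℕ → Fin N) (Cache : ℕ → Finset (Fin N))
    (V : Fin N → ℕ → Matrix (Fin d) (Fin d) ℝ)
    (hV : ∀ a t, V a t = lam • (1 : Matrix (Fin d) (Fin d) ℝ) +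
      ∑ s ∈ Finset.range t, (if Arm s = a then Matrix.vecMulVec (x s) (x s) else 0))
    (θhat : Fin N → ℕ → EuclideanSpace ℝ (Fin d))
    (β : ℕ → ℝ) (hβ0 : ∀ t, 0 ≤ β t) (hβmono : Monotone β)
    (μ : ℕ → Fin N → Finset (Fin N) → ℝ)
    (hμ : ∀ t a C, μ t a C = ⟪θstar a, x t⟫ - α * lat a * (if a ∈ C then 0 else 1))
    (score : ℕ → Fin N → ℝ)
    (hscore : ∀ t a, score t a = ⟪θhat a t, x t⟫ +
      β t * Real.sqrt ((x t) ⬝ᵥ ((V a t)⁻¹.mulVec (x t))) -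
      α * lat a * (if a ∈ Cache t then 0 else 1))
    (hroute : ∀ t < T, ∀ a, score t a ≤ score t (Arm t))
    (hconf : ∀ (a : Fin N), ∀ t ≤ T,
      |⟪θhat a t - θstar a, x t⟫| ≤ β t * Real.sqrt ((x t) ⬝ᵥ ((V a t)⁻¹.mulVec (x t)))) :
    ∑ t ∈ Finset.range T,
        ((Finset.univ.sup' (Finset.univ_nonempty_iff.mpr ⟨⟨0, hN⟩⟩)
          fun a => μ t a (Cache t)) - μ t (Arm t) (Cache t)) ≤
      2 * β T * Real.sqrt (2 * N * d * T * Real.log (1 + T / (d * lam))) := by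
  classical
  set w : Fin N → ℕ → ℝ := fun a t => (x t) ⬝ᵥ ((V a t)⁻¹.mulVec (x t)) with hwdef
  -- basic positivity facts
  have hlam0 : (0:ℝ) < lam := by linarith
  have hSpsd : ∀ (a : Fin N) (t : ℕ),
      (∑ s ∈ Finset.range t,
        (if Arm s = a then Matrix.vecMulVec (x s) (x s) else 0)).PosSemidef := by
    intro a t
    refine psd_sum _ _ fun s _ => ?_
    split
    · exact psd_vecMulVec _
    · exact Matrix.PosSemidef.zero
  have hPD : ∀ (a : Fin N) (t : ℕ), (V a t).PosDef := by
    intro a t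
    rw [hV a t]
    exact posdef_smul_one_add lam hlam0 _ (hSpsd a t)
  have hxx : ∀ t, (x t) ⬝ᵥ (x t) ≤ 1 := by
    intro t
    have h1 : (x t) ⬝ᵥ (x t) = ⟪x t, x t⟫ := by
      rw [EuclideanSpace.inner_eq_star_dotProduct, star_trivial]
    rw [h1, real_inner_self_eq_norm_sq]
    have := hx t
    nlinarith [norm_nonneg (x t)]
  have hw0 : ∀ a t, 0 ≤ w a t := fun a t => quad_nonneg (hPD a t) (x t)
  have hw1 : ∀ a t, w a t ≤ 1 := fun a t =>
    quad_le_one lam hlam _ (hSpsd a t) (hV a t) (x t) (hxx t)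
  -- per-round regret bound
  have hgap : ∀ t < T,
      ((Finset.univ.sup' (Finset.univ_nonempty_iff.mpr ⟨⟨0, hN⟩⟩)
          fun a => μ t a (Cache t)) - μ t (Arm t) (Cache t)) ≤
        2 * β T * Real.sqrt (w (Arm t) t) := by
    intro t ht
    have hβt : β t ≤ β T := hβmono ht.le
    have hs0 : 0 ≤ Real.sqrt (w (Arm t) t) := Real.sqrt_nonneg _
    have step : ∀ a : Fin N,
        μ t a (Cache t) ≤ μ t (Arm t) (Cache t) + 2 * β t * Real.sqrt (w (Arm t) t) := by
      intro a
      have hca := (abs_le.mp (hconf a t ht.le)).1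
      have hcb := (abs_le.mp (hconf (Arm t) t ht.le)).2
      have hia : ⟪θhat a t - θstar a, x t⟫ = ⟪θhat a t, x t⟫ - ⟪θstar a, x t⟫ :=
        inner_sub_left _ _ _
      have hib : ⟪θhat (Arm t) t - θstar (Arm t), x t⟫ =
          ⟪θhat (Arm t) t, x t⟫ - ⟪θstar (Arm t), x t⟫ := inner_sub_left _ _ _
      have h1 : μ t a (Cache t) ≤ score t a := by
        rw [hμ, hscore]
        rw [hia] at hca
        linarith
      have h2 : score t a ≤ score t (Arm t) := hroute t ht a
      have h3 : score t (Arm t) ≤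
          μ t (Arm t) (Cache t) + 2 * β t * Real.sqrt (w (Arm t) t) := by
        rw [hμ, hscore]
        rw [hib] at hcb
        linarith
      linarith
    have hsup := Finset.sup'_le (Finset.univ_nonempty_iff.mpr ⟨⟨0, hN⟩⟩)
      (fun a => μ t a (Cache t)) (fun a _ => step a)
    have hmul : 2 * β t * Real.sqrt (w (Arm t) t) ≤ 2 * β T * Real.sqrt (w (Arm t) t) := by
      apply mul_le_mul_of_nonneg_right _ hs0
      linarith
    linarith
  -- elliptical potential
  have hL0 : 0 ≤ Real.log (1 + T / (d * lam)) := by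
    apply Real.log_nonneg
    have : (0:ℝ) ≤ (T:ℝ) / (d * lam) := by positivity
    linarith
  have harm : ∀ a : Fin N,
      (∑ t ∈ Finset.range T, if Arm t = a then w a t else 0) ≤
        2 * d * Real.log (1 + T / (d * lam)) := by
    intro a
    have hdr : (0:ℝ) < d := by exact_mod_cast hd
    have hlogstep : ∀ t, (if Arm t = a then Real.log (1 + w a t) else 0) =
        Real.log (V a (t+1)).det - Real.log (V a t).det := by
      intro t
      have hVstep : V a (t+1) = V a t +
          (if Arm t = a then Matrix.vecMulVec (x t) (x t) else 0) := by
        rw [hV a (t+1), hV a t, Finset.sum_range_succ, add_assoc]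
      by_cases h : Arm t = a
      · rw [if_pos h] at hVstep ⊢
        rw [hVstep, det_step _ (hPD a t) (x t),
          Real.log_mul (hPD a t).det_pos.ne' (by have := hw0 a t; positivity)]
        have hww : w a t = (x t) ⬝ᵥ ((V a t)⁻¹.mulVec (x t)) := rfl
        rw [hww]
        ring
      · rw [if_neg h] at hVstep ⊢
        rw [hVstep, add_zero, sub_self]
    have htel : (∑ t ∈ Finset.range T, if Arm t = a then Real.log (1 + w a t) else 0) =
        Real.log (V a T).det - Real.log (V a 0).det := by
      rw [Finset.sum_congr rfl fun t _ => hlogstep t]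
      exact Finset.sum_range_sub (fun t => Real.log (V a t).det) T
    have hV0 : (V a 0).det = lam ^ d := by
      rw [hV a 0]
      simp [Matrix.det_smul]
    have hterm : ∀ s, (if Arm s = a then Matrix.vecMulVec (x s) (x s) else 0).trace ≤ 1 := by
      intro s
      by_cases h : Arm s = a
      · have h2 : (Matrix.vecMulVec (x s) (x s)).trace = (x s) ⬝ᵥ (x s) := by
          simp [Matrix.trace, Matrix.vecMulVec_apply, Matrix.diag, dotProduct]
        rw [if_pos h, h2]; exact hxx s
      · rw [if_neg h]; simp
    have hterm0 : ∀ s, 0 ≤ (if Arm s = a then Matrix.vecMulVec (x s) (x s) else 0).trace := by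
      intro s
      by_cases h : Arm s = a
      · rw [if_pos h]
        simp only [Matrix.trace, Matrix.diag, Matrix.vecMulVec_apply]
        exact Finset.sum_nonneg fun i _ => mul_self_nonneg _
      · rw [if_neg h]; simp
    have h1 : (V a T).trace = lam * d + ∑ s ∈ Finset.range T,
        (if Arm s = a then Matrix.vecMulVec (x s) (x s) else 0).trace := by
      rw [hV a T, Matrix.trace_add, Matrix.trace_sum, Matrix.trace_smul, Matrix.trace_one]
      simp
    have hsum1 : (∑ s ∈ Finset.range T,
        (if Arm s = a then Matrix.vecMulVec (x s) (x s) else 0).trace) ≤ (T:ℝ) := by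
      calc (∑ s ∈ Finset.range T,
          (if Arm s = a then Matrix.vecMulVec (x s) (x s) else 0).trace)
          ≤ ∑ _s ∈ Finset.range T, (1:ℝ) := Finset.sum_le_sum fun s _ => hterm s
        _ = T := by simp
    have hsum0 : (0:ℝ) ≤ ∑ s ∈ Finset.range T,
        (if Arm s = a then Matrix.vecMulVec (x s) (x s) else 0).trace :=
      Finset.sum_nonneg fun s _ => hterm0 s
    have htrace : (V a T).trace ≤ d * lam + T := by rw [h1]; linarith
    have htrace0 : (0:ℝ) ≤ (V a T).trace := by rw [h1]; nlinarith [hlam0, hdr]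
    have hdetT : (V a T).det ≤ (lam + T / d) ^ d := by
      calc (V a T).det ≤ ((V a T).trace / d) ^ d := det_le_pow_trace hd (hPD a T)
        _ ≤ (lam + T / d) ^ d := by
            apply pow_le_pow_left₀ (by positivity)
            rw [div_le_iff₀ hdr]
            calc (V a T).trace ≤ d * lam + T := htrace
              _ = (lam + T / d) * d := by field_simp
    have hlogdetT : Real.log (V a T).det ≤ d * Real.log (lam + T / d) := by
      calc Real.log (V a T).det ≤ Real.log ((lam + T / d) ^ d) :=
            Real.log_le_log (hPD a T).det_pos hdetT
        _ = d * Real.log (lam + T / d) := by rw [Real.log_pow]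
    have hlogdet0 : Real.log (V a 0).det = d * Real.log lam := by
      rw [hV0, Real.log_pow]
    have hlogdiff : Real.log (lam + T / d) - Real.log lam =
        Real.log (1 + T / (d * lam)) := by
      rw [← Real.log_div (by positivity) hlam0.ne']
      congr 1
      field_simp
    calc (∑ t ∈ Finset.range T, if Arm t = a then w a t else 0)
        ≤ ∑ t ∈ Finset.range T, if Arm t = a then 2 * Real.log (1 + w a t) else 0 := by
          refine Finset.sum_le_sum fun t _ => ?_
          by_cases h : Arm t = a
          · simpa [h] using le_two_log (hw0 a t) (hw1 a t)
          · simp [h]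
      _ = 2 * ∑ t ∈ Finset.range T, if Arm t = a then Real.log (1 + w a t) else 0 := by
          rw [Finset.mul_sum]
          refine Finset.sum_congr rfl fun t _ => ?_
          by_cases h : Arm t = a <;> simp [h]
      _ = 2 * (Real.log (V a T).det - Real.log (V a 0).det) := by rw [htel]
      _ ≤ 2 * (d * Real.log (lam + T / d) - d * Real.log lam) := by
          rw [hlogdet0]; linarith [hlogdetT]
      _ = 2 * d * (Real.log (lam + T / d) - Real.log lam) := by ring
      _ = 2 * d * Real.log (1 + T / (d * lam)) := by rw [hlogdiff]
  have hpot : (∑ t ∈ Finset.range T, w (Arm t) t) ≤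
      2 * N * d * Real.log (1 + T / (d * lam)) := by
    have hswap : (∑ t ∈ Finset.range T, w (Arm t) t) =
        ∑ a : Fin N, ∑ t ∈ Finset.range T, if Arm t = a then w a t else 0 := by
      rw [Finset.sum_comm]
      refine Finset.sum_congr rfl fun t _ => ?_
      rw [Finset.sum_ite_eq Finset.univ (Arm t) (fun a => w a t)]
      simp
    rw [hswap]
    calc (∑ a : Fin N, ∑ t ∈ Finset.range T, if Arm t = a then w a t else 0)
        ≤ ∑ a : Fin N, 2 * d * Real.log (1 + T / (d * lam)) :=
          Finset.sum_le_sum fun a _ => harm a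
      _ = N * (2 * d * Real.log (1 + T / (d * lam))) := by
          rw [Finset.sum_const, Finset.card_univ, Fintype.card_fin]; ring
      _ = 2 * N * d * Real.log (1 + T / (d * lam)) := by ring
  -- assemble
  have hsumsqrt : (∑ t ∈ Finset.range T, Real.sqrt (w (Arm t) t)) ≤
      Real.sqrt (T * ∑ t ∈ Finset.range T, w (Arm t) t) := by
    have hsq := sq_sum_le_card_mul_sum_sq (s := Finset.range T)
      (f := fun t => Real.sqrt (w (Arm t) t))
    rw [Finset.card_range] at hsq
    have heq : (∑ t ∈ Finset.range T, Real.sqrt (w (Arm t) t) ^ 2) =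
        ∑ t ∈ Finset.range T, w (Arm t) t := by
      refine Finset.sum_congr rfl fun t _ => Real.sq_sqrt (hw0 _ _)
    rw [heq] at hsq
    have h0 : 0 ≤ ∑ t ∈ Finset.range T, Real.sqrt (w (Arm t) t) :=
      Finset.sum_nonneg fun t _ => Real.sqrt_nonneg _
    exact Real.le_sqrt_of_sq_le (by exact_mod_cast hsq)
  calc ∑ t ∈ Finset.range T,
        ((Finset.univ.sup' (Finset.univ_nonempty_iff.mpr ⟨⟨0, hN⟩⟩)
          fun a => μ t a (Cache t)) - μ t (Arm t) (Cache t))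
      ≤ ∑ t ∈ Finset.range T, 2 * β T * Real.sqrt (w (Arm t) t) :=
        Finset.sum_le_sum fun t ht => hgap t (Finset.mem_range.mp ht)
    _ = 2 * β T * ∑ t ∈ Finset.range T, Real.sqrt (w (Arm t) t) := by
        rw [Finset.mul_sum]
    _ ≤ 2 * β T * Real.sqrt (T * ∑ t ∈ Finset.range T, w (Arm t) t) := by
        apply mul_le_mul_of_nonneg_left hsumsqrt
        have := hβ0 T; linarith
    _ ≤ 2 * β T * Real.sqrt (2 * N * d * T * Real.log (1 + T / (d * lam))) := by
        apply mul_le_mul_of_nonneg_left _ (by have := hβ0 T; linarith)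
        apply Real.sqrt_le_sqrt
        calc (T:ℝ) * ∑ t ∈ Finset.range T, w (Arm t) t
            ≤ T * (2 * N * d * Real.log (1 + T / (d * lam))) := by
              apply mul_le_mul_of_nonneg_left hpot (by positivity)
          _ = 2 * N * d * T * Real.log (1 + T / (d * lam)) := by ring
end

section
/- Let M be a finite set, and for each t = 1,…,H and a ∈ M let μ_t(a;S) := v_t(a) − pen(a)·1{a ∉ S}, where v_t(a) ∈ R and pen(a) ≥ 0. Then the set function f(S) := Σ_{t=1}^H [max_{a∈M} μ_t(a;S) − max_{a∈M} μ_t(a;∅)], defined on subsets S ⊆ M, is monotone nondecreasing (S ⊆ S' implies f(S) ≤ f(S')) and submodular (for all S ⊆ S' ⊆ M and a₀ ∈ M, f(S ∪ {a₀}) − f(S) ≥ f(S' ∪ {a₀}) − f(S')). -/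
open Finset

/-- **Monotonicity and submodularity of the cache benefit.**
For `μ_t(a;S) = v_t a − pen a · 1{a ∉ S}` with `pen ≥ 0`, the cache-benefit function
`f(S) = Σ_{t<H} (max_a μ_t(a;S) − max_a μ_t(a;∅))` is monotone nondecreasing and
submodular on subsets of the arm set. -/
theorem cache_benefit_monotone_submodular {A : Type*} [Fintype A] [Nonempty A] [DecidableEq A]
    (H : ℕ) (v : ℕ → A → ℝ) (pen : A → ℝ) (hpen : ∀ a, 0 ≤ pen a)
    (μ : ℕ → A → Finset A → ℝ)
    (hμ : ∀ t a S, μ t a S = v t a - pen a * (if a ∈ S then 0 else 1))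
    (f : Finset A → ℝ)
    (hf : ∀ S, f S = ∑ t ∈ Finset.range H,
      ((Finset.univ.sup' Finset.univ_nonempty fun a => μ t a S) -
        (Finset.univ.sup' Finset.univ_nonempty fun a => μ t a ∅))) :
    (∀ S S' : Finset A, S ⊆ S' → f S ≤ f S') ∧
      (∀ S S' : Finset A, S ⊆ S' → ∀ a₀ : A,
        f (insert a₀ S') - f S' ≤ f (insert a₀ S) - f S) := by
  set g : ℕ → Finset A → ℝ :=
    fun t S => Finset.univ.sup' Finset.univ_nonempty fun a => μ t a S with hg
  -- pointwise monotonicity of μ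
  have hμmono : ∀ t a (S S' : Finset A), S ⊆ S' → μ t a S ≤ μ t a S' := by
    intro t a S S' hSS
    rw [hμ, hμ]
    have : pen a * (if a ∈ S' then 0 else 1) ≤ pen a * (if a ∈ S then 0 else 1) := by
      apply mul_le_mul_of_nonneg_left _ (hpen a)
      by_cases h : a ∈ S
      · simp [h, hSS h]
      · by_cases h' : a ∈ S' <;> simp [h, h']
    linarith
  have hgmono : ∀ t (S S' : Finset A), S ⊆ S' → g t S ≤ g t S' := by
    intro t S S' hSS
    apply Finset.sup'_le
    intro a _
    exact le_trans (hμmono t a S S' hSS) (Finset.le_sup' (fun a => μ t a S') (Finset.mem_univ a))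
  -- effect of inserting a₀
  have hins : ∀ t (S : Finset A) (a₀ : A), g t (insert a₀ S) = max (g t S) (v t a₀) := by
    intro t S a₀
    apply le_antisymm
    · apply Finset.sup'_le
      intro a _
      by_cases h : a = a₀
      · subst h
        rw [hμ]
        simp
      · have heq : μ t a (insert a₀ S) = μ t a S := by
          simp [hμ, Finset.mem_insert, h]
        rw [heq]
        exact le_trans (Finset.le_sup' (fun a => μ t a S) (Finset.mem_univ a)) (le_max_left _ _)
    · apply max_le
      · exact hgmono t S _ (Finset.subset_insert _ _)
      · have : v t a₀ = μ t a₀ (insert a₀ S) := by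
          rw [hμ]; simp
        rw [this]
        exact Finset.le_sup' (fun a => μ t a (insert a₀ S)) (Finset.mem_univ a₀)
  have hfdiff : ∀ (S : Finset A) (a₀ : A),
      f (insert a₀ S) - f S = ∑ t ∈ Finset.range H, (max (g t S) (v t a₀) - g t S) := by
    intro S a₀
    rw [hf, hf, ← Finset.sum_sub_distrib]
    apply Finset.sum_congr rfl
    intro t _
    rw [← hins t S a₀]
    ring
  constructor
  · intro S S' hSS
    rw [hf, hf]
    apply Finset.sum_le_sum
    intro t _
    have := hgmono t S S' hSS
    linarith
  · intro S S' hSS a₀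
    rw [hfdiff, hfdiff]
    apply Finset.sum_le_sum
    intro t _
    have h1 := hgmono t S S' hSS
    rcases le_total (v t a₀) (g t S) with h | h
    · rw [max_eq_left h, max_eq_left (le_trans h h1)]
      simp
    · rw [max_eq_right h]
      rcases le_total (v t a₀) (g t S') with h' | h'
      · rw [max_eq_left h']; linarith
      · rw [max_eq_right h']; linarith
end

section
/- Let M be a finite set, v : M → R, pen : M → [0,∞), and for x fixed define μ(a;S) := v(a) − pen(a)·1{a ∉ S} for S ⊆ M. Then for all S ⊆ S' ⊆ M and a₀ ∈ M: max_{a∈M} μ(a; S' ∪ {a₀}) + max_{a∈M} μ(a; S) ≤ max_{a∈M} μ(a; S ∪ {a₀}) + max_{a∈M} μ(a; S'). -/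
open Finset

/-- **Single-step submodularity of the per-round maximum reward.**
With `μ(a;S) = v a − pen a · 1{a ∉ S}` and nonnegative penalties, for all `S ⊆ S'` and any
arm `a₀`:
`max_a μ(a; S' ∪ {a₀}) + max_a μ(a; S) ≤ max_a μ(a; S ∪ {a₀}) + max_a μ(a; S')`. -/
theorem max_reward_single_step_submodular {A : Type*} [Fintype A] [Nonempty A] [DecidableEq A]
    (v pen : A → ℝ) (hpen : ∀ a, 0 ≤ pen a)
    (μ : A → Finset A → ℝ)
    (hμ : ∀ a S, μ a S = v a - pen a * (if a ∈ S then 0 else 1))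
    (S S' : Finset A) (hSS : S ⊆ S') (a₀ : A) :
    (Finset.univ.sup' Finset.univ_nonempty fun a => μ a (insert a₀ S')) +
        (Finset.univ.sup' Finset.univ_nonempty fun a => μ a S) ≤
      (Finset.univ.sup' Finset.univ_nonempty fun a => μ a (insert a₀ S)) +
        (Finset.univ.sup' Finset.univ_nonempty fun a => μ a S') := by
  have mono : ∀ (a : A) (T T' : Finset A), T ⊆ T' → μ a T ≤ μ a T' := by
    intro a T T' hTT
    rw [hμ, hμ]
    by_cases h : a ∈ T
    · simp [h, hTT h]
    · by_cases h' : a ∈ T' <;> simp [h, h'] <;> nlinarith [hpen a]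
  obtain ⟨a, -, ha⟩ := Finset.exists_mem_eq_sup' Finset.univ_nonempty
    (fun a => μ a (insert a₀ S'))
  obtain ⟨b, -, hb⟩ := Finset.exists_mem_eq_sup' Finset.univ_nonempty (fun a => μ a S)
  rw [ha, hb]
  by_cases hc : a ∈ insert a₀ S
  · have hc' : a ∈ insert a₀ S' := by
      rcases Finset.mem_insert.1 hc with h | h
      · exact Finset.mem_insert.2 (Or.inl h)
      · exact Finset.mem_insert.2 (Or.inr (hSS h))
    have h1 : μ a (insert a₀ S') = μ a (insert a₀ S) := by
      rw [hμ, hμ]; simp [hc, hc']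
    calc μ a (insert a₀ S') + μ b S
        ≤ μ a (insert a₀ S) + μ b S' := by
          rw [h1]; exact add_le_add le_rfl (mono b S S' hSS)
      _ ≤ _ := add_le_add (Finset.le_sup' (fun x => μ x _) (Finset.mem_univ a))
          (Finset.le_sup' (fun x => μ x _) (Finset.mem_univ b))
  · have hne : a ≠ a₀ := fun h => hc (h ▸ Finset.mem_insert_self a₀ S)
    have h1 : μ a (insert a₀ S') = μ a S' := by
      rw [hμ, hμ]
      by_cases h : a ∈ S' <;> simp [h, Finset.mem_insert, hne]
    have h2 : μ b S ≤ μ b (insert a₀ S) :=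
      mono b S (insert a₀ S) (Finset.subset_insert _ _)
    calc μ a (insert a₀ S') + μ b S
        ≤ μ a S' + μ b (insert a₀ S) := by rw [h1]; exact add_le_add le_rfl h2
      _ ≤ (Finset.univ.sup' Finset.univ_nonempty fun a => μ a S') +
          (Finset.univ.sup' Finset.univ_nonempty fun a => μ a (insert a₀ S)) :=
          add_le_add (Finset.le_sup' (fun x => μ x _) (Finset.mem_univ a))
            (Finset.le_sup' (fun x => μ x _) (Finset.mem_univ b))
      _ = _ := add_comm _ _
end

section
/- In POLAR+, let M_ℓ := Σ_{j=0}^ℓ m_j denote the cumulative per-arm forced-exploration plays through epoch ℓ, where m_j = Θ(d·(j + c₀)). Then there exists an epoch index ℓ₀ — any ℓ with M_ℓ > 8β_T²/(σ_min·Δ_min²) suffices — such that, on the confidence event and the forced-exploration eigenvalue event, for all epochs ℓ ≥ ℓ₀, all arms a ∈ M, and all rounds t in epoch ℓ, the exploration bonus satisfies β_t·√(x_t^T V_{a,t}^{-1} x_t) < Δ_min/2; moreover this condition persists in all subsequent epochs. -/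
open Finset
open scoped RealInnerProductSpace Matrix

lemma inv_quad_le_aux {d : ℕ} (V : Matrix (Fin d) (Fin d) ℝ) (hV : V.PosDef)
    (c : ℝ) (hc : 0 < c)
    (h : ∀ u : EuclideanSpace ℝ (Fin d), c * ‖u‖ ^ 2 ≤ u ⬝ᵥ (V.mulVec u))
    (x : EuclideanSpace ℝ (Fin d)) :
    (x : Fin d → ℝ) ⬝ᵥ (V⁻¹.mulVec x) ≤ ‖x‖ ^ 2 / c := by
  have hdet : IsUnit V.det := isUnit_iff_ne_zero.mpr hV.det_pos.ne'
  set y : EuclideanSpace ℝ (Fin d) := WithLp.toLp 2 (V⁻¹.mulVec x) with hy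
  have hVy : V.mulVec (y : Fin d → ℝ) = x := by
    rw [hy]
    show V.mulVec (V⁻¹.mulVec x) = x
    rw [Matrix.mulVec_mulVec, Matrix.mul_nonsing_inv V hdet, Matrix.one_mulVec]
  have h1 : c * ‖y‖ ^ 2 ≤ (y : Fin d → ℝ) ⬝ᵥ (V.mulVec y) := h y
  rw [hVy] at h1
  have hyx : (y : Fin d → ℝ) ⬝ᵥ (x : Fin d → ℝ) = (x : Fin d → ℝ) ⬝ᵥ (y : Fin d → ℝ) :=
    dotProduct_comm _ _
  rw [hyx] at h1
  have hinner : (x : Fin d → ℝ) ⬝ᵥ (y : Fin d → ℝ) = ⟪x, y⟫ := by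
    simp [dotProduct, PiLp.inner_apply, RCLike.inner_apply, mul_comm]
  have hCS : ⟪x, y⟫ ≤ ‖x‖ * ‖y‖ := real_inner_le_norm x y
  change (x : Fin d → ℝ) ⬝ᵥ (y : Fin d → ℝ) ≤ ‖x‖ ^ 2 / c
  rw [hinner] at h1 ⊢
  rcases le_or_gt (⟪x, y⟫ : ℝ) 0 with hq0 | hq0
  · exact hq0.trans (by positivity)
  · rw [le_div_iff₀ hc]
    nlinarith [norm_nonneg x, norm_nonneg y, mul_le_mul hCS hCS (le_of_lt hq0) (by positivity)]

/-- **Bootstrap epoch for the exploration bonus (POLAR+).**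
With per-arm forced-exploration budgets `m_j = κ d (j + c₀)` and cumulative budgets
`M_ℓ = Σ_{j≤ℓ} m_j`, epochs of POLAR+ start at `n_ℓ = Σ_{j<ℓ} (N m_j + 2^j)`.  On the
confidence event and the forced-exploration eigenvalue event
(`λ_min(V_{a,t}) ≥ λ + σ_min M_ℓ / 2` for every round `t` of epoch `ℓ` past the forced
phase), there exists an epoch `ℓ₀` — any `ℓ₀` with `M_{ℓ₀} > 8 β_T² / (σ_min Δ_min²)`
suffices — such that for every epoch `ℓ ≥ ℓ₀`, every arm `a`, and every round `t ≤ T`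
in (the exploitation phase of) epoch `ℓ`, the bonus satisfies
`β_t √(x_tᵀ V_{a,t}⁻¹ x_t) < Δ_min / 2`; the condition persists in all later epochs. -/
theorem bonus_bootstrap_epoch
    (N d T : ℕ) (hN : 0 < N) (hd : 0 < d)
    (κ c₀ : ℕ) (hκ : 1 ≤ κ)
    (m M n : ℕ → ℕ)
    (hm : ∀ j, m j = κ * d * (j + c₀))
    (hM : ∀ ℓ, M ℓ = ∑ j ∈ Finset.range (ℓ + 1), m j)
    (hn : ∀ ℓ, n ℓ = ∑ j ∈ Finset.range ℓ, (N * m j + 2 ^ j))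
    (σmin Δmin lam βT : ℝ)
    (hσmin : 0 < σmin) (hΔmin : 0 < Δmin) (hlam : 1 ≤ lam) (hβT : 0 ≤ βT)
    (β : ℕ → ℝ) (hβ0 : ∀ t, 0 ≤ β t) (hβub : ∀ t ≤ T, β t ≤ βT)
    (x : ℕ → EuclideanSpace ℝ (Fin d)) (hx : ∀ t, ‖x t‖ ≤ 1)
    (θstar : Fin N → EuclideanSpace ℝ (Fin d)) (hθ : ∀ a, ‖θstar a‖ ≤ 1)
    (θhat : Fin N → ℕ → EuclideanSpace ℝ (Fin d))
    (V : Fin N → ℕ → Matrix (Fin d) (Fin d) ℝ)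
    (hVpos : ∀ a t, (V a t).PosDef)
    -- confidence event
    (hconf : ∀ (a : Fin N), ∀ t ≤ T,
      |⟪θhat a t - θstar a, x t⟫| ≤ β t * Real.sqrt ((x t) ⬝ᵥ ((V a t)⁻¹.mulVec (x t))))
    -- forced-exploration eigenvalue event
    (hEig : ∀ (a : Fin N) (ℓ t : ℕ), n ℓ + N * m ℓ ≤ t → t < n (ℓ + 1) →
      ∀ u : EuclideanSpace ℝ (Fin d),
        (lam + σmin * M ℓ / 2) * ‖u‖ ^ 2 ≤ u ⬝ᵥ ((V a t).mulVec u)) :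
    (∃ ℓ₀ : ℕ, 8 * βT ^ 2 / (σmin * Δmin ^ 2) < (M ℓ₀ : ℝ)) ∧
      ∀ ℓ₀ : ℕ, 8 * βT ^ 2 / (σmin * Δmin ^ 2) < (M ℓ₀ : ℝ) →
        ∀ ℓ, ℓ₀ ≤ ℓ → ∀ a : Fin N, ∀ t ≤ T,
          n ℓ + N * m ℓ ≤ t → t < n (ℓ + 1) →
          β t * Real.sqrt ((x t) ⬝ᵥ ((V a t)⁻¹.mulVec (x t))) < Δmin / 2 := by
  constructor
  · obtain ⟨k, hk⟩ := exists_nat_gt (8 * βT ^ 2 / (σmin * Δmin ^ 2))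
    refine ⟨k, hk.trans_le ?_⟩
    have hkM : k ≤ M k := by
      have h1 : m k ≤ M k := by
        rw [hM]
        exact Finset.single_le_sum (f := m) (fun i _ => Nat.zero_le _)
          (Finset.self_mem_range_succ k)
      have h2 : k ≤ m k := by
        rw [hm]
        calc k ≤ 1 * 1 * (k + c₀) := by omega
          _ ≤ κ * d * (k + c₀) := Nat.mul_le_mul (Nat.mul_le_mul hκ hd) le_rfl
      omega
    exact_mod_cast hkM
  · intro ℓ₀ hℓ₀ ℓ hℓ a t hT h1 h2
    set c : ℝ := lam + σmin * M ℓ / 2 with hc_def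
    have hlam0 : (0 : ℝ) < lam := lt_of_lt_of_le one_pos hlam
    have hM0 : (0 : ℝ) ≤ (M ℓ : ℝ) := Nat.cast_nonneg _
    have hc : 0 < c := by positivity
    have hMmono : (M ℓ₀ : ℝ) ≤ (M ℓ : ℝ) := by
      have : M ℓ₀ ≤ M ℓ := by
        rw [hM, hM]
        exact Finset.sum_le_sum_of_subset (Finset.range_subset_range.mpr (by omega))
      exact_mod_cast this
    have hbig : 8 * βT ^ 2 / (σmin * Δmin ^ 2) < (M ℓ : ℝ) := lt_of_lt_of_le hℓ₀ hMmono
    have hbig' : 8 * βT ^ 2 < (M ℓ : ℝ) * (σmin * Δmin ^ 2) :=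
      (div_lt_iff₀ (by positivity)).mp hbig
    have key : 4 * βT ^ 2 < Δmin ^ 2 * c := by
      rw [hc_def]
      nlinarith [mul_pos (pow_pos hΔmin 2) hlam0, sq_nonneg Δmin]
    have hq := inv_quad_le_aux (V a t) (hVpos a t) c hc (hEig a ℓ t h1 h2) (x t)
    set q : ℝ := (x t : Fin d → ℝ) ⬝ᵥ ((V a t)⁻¹.mulVec (x t)) with hqdef
    have hq1c : q ≤ 1 / c := by
      refine hq.trans ?_
      gcongr
      nlinarith [hx t, norm_nonneg (x t)]
    have hs : Real.sqrt q ≤ Real.sqrt (1 / c) := Real.sqrt_le_sqrt hq1c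
    have final : βT * Real.sqrt (1 / c) < Δmin / 2 := by
      have hs2 : Real.sqrt (1 / c) ^ 2 = 1 / c := Real.sq_sqrt (by positivity)
      have hlt : (βT * Real.sqrt (1 / c)) ^ 2 < (Δmin / 2) ^ 2 := by
        rw [mul_pow, hs2, div_pow, mul_one_div, div_lt_div_iff₀ hc (by norm_num)]
        nlinarith [key]
      exact lt_of_pow_lt_pow_left₀ 2 (by positivity) hlt
    calc β t * Real.sqrt q ≤ βT * Real.sqrt q :=
          mul_le_mul_of_nonneg_right (hβub t hT) (Real.sqrt_nonneg q)
      _ ≤ βT * Real.sqrt (1 / c) := mul_le_mul_of_nonneg_left hs hβT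
      _ < Δmin / 2 := final
end

section
/- Under i.i.d. regularity and cacheable diversity, there exists an epoch index ℓ_cache with cumulative per-arm forced plays M_{ℓ_cache} > c·β_T²/(σ_min·min(Δ_cache, Δ_dom)²) such that, with high probability, for all epochs ℓ ≥ ℓ_cache: (i) the cache selected by POLAR+, C_ℓ := argmax_{|S|=K} F̂_{n_ℓ + N m_ℓ}(S), satisfies C_ℓ ⊆ M_hot; and (ii) for every hot cache S ⊆ M_hot with |S| = K and every context x with ‖x‖₂ ≤ 1, the estimated maximum max_{a∈M} μ̂(a;S;x) is achieved by a hot arm, i.e., max_{a∈M} μ̂(a;S;x) = max_{a∈M_hot} μ̂(a;S;x). -/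
open MeasureTheory ProbabilityTheory Finset
open scoped RealInnerProductSpace ENNReal

lemma abs_sup'_sub_sup'_le {ι : Type*} {s : Finset ι} (hs : s.Nonempty) (f g : ι → ℝ) {ε : ℝ}
    (h : ∀ a ∈ s, |f a - g a| ≤ ε) :
    |s.sup' hs f - s.sup' hs g| ≤ ε := by
  rw [abs_sub_le_iff]
  constructor
  · rw [sub_le_iff_le_add]
    apply Finset.sup'_le
    intro b hb
    have h1 := (abs_le.1 (h b hb)).2
    have h2 : g b ≤ s.sup' hs g := Finset.le_sup' g hb
    linarith
  · rw [sub_le_iff_le_add]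
    apply Finset.sup'_le
    intro b hb
    have h1 := (abs_le.1 (h b hb)).1
    have h2 : f b ≤ s.sup' hs f := Finset.le_sup' f hb
    linarith

lemma variance_le_sq_of_bound {Ω : Type*} [MeasurableSpace Ω] {P : Measure Ω}
    [IsProbabilityMeasure P] {X : Ω → ℝ} {B : ℝ} (hX : MemLp X 2 P)
    (hb : ∀ᵐ ω ∂P, |X ω| ≤ B) : variance X P ≤ B ^ 2 := by
  rw [ProbabilityTheory.variance_eq_sub hX]
  have h1 : ∫ ω, X ω ^ 2 ∂P ≤ B ^ 2 := by
    calc ∫ ω, X ω ^ 2 ∂P ≤ ∫ _ω, B ^ 2 ∂P := by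
          apply integral_mono_ae hX.integrable_sq (integrable_const _)
          filter_upwards [hb] with ω h
          calc X ω ^ 2 = |X ω| ^ 2 := (sq_abs _).symm
            _ ≤ B ^ 2 := by
                have := abs_nonneg (X ω)
                nlinarith
      _ = B ^ 2 := by simp
  have h2 : (∫ ω, X ω ^ 2 ∂P) = P[X ^ 2] := by
    simp [Pi.pow_apply]
  nlinarith [sq_nonneg (P[X])]

set_option maxHeartbeats 2000000 in
/-- **Cache bootstrap for POLAR+ (Lemma: cache bootstrap).**
Under i.i.d. regularity (unit-ball contexts with `E[x xᵀ] ⪰ σ_min I`) and cacheable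
diversity (hot set `M_hot`, cache-separability gap `Δ_cache > 0` for the population
utility `F`, and hot-dominance gap `Δ_dom = α min_{a ∉ M_hot} λ_a − 2 > 0`), and since
after `M_ℓ` forced plays per arm every arm's `ℓ₂` estimation error is at most
`β_T/√(σ_min M_ℓ/2)`, there exist an absolute constant `c > 0` and an epoch `ℓ_cache`
with `M_{ℓ_cache} > c β_T²/(σ_min min(Δ_cache, Δ_dom)²)` such that, with probability at
least `1 − δ`, for all epochs `ℓ ≥ ℓ_cache`:
(i) the cache `C_ℓ = argmax_{|S|=K} F̂_{n_ℓ + N m_ℓ}(S)` satisfies `C_ℓ ⊆ M_hot`; and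
(ii) for every hot cache `S ⊆ M_hot` with `|S| = K` and every `‖y‖ ≤ 1`, the estimated
maximum `max_{a∈M} μ̂(a;S;y)` is achieved by a hot arm. -/
theorem cache_bootstrap
    (N d K : ℕ) (hN : 0 < N) (hd : 0 < d) (hK : 1 ≤ K) (hKN : K ≤ N)
    (α σmin Δcache Δdom βT δ : ℝ)
    (hα : 0 < α) (hσmin : 0 < σmin) (hβT : 0 < βT) (hδ : 0 < δ) (hδ1 : δ < 1)
    (lat : Fin N → ℝ) (hlat : ∀ a, 0 < lat a)
    (θstar : Fin N → EuclideanSpace ℝ (Fin d)) (hθ : ∀ a, ‖θstar a‖ ≤ 1)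
    -- epoch schedule: m = per-arm forced budgets, M = cumulative, n = epoch starts
    (m M n : ℕ → ℕ)
    (hM : ∀ ℓ, M ℓ = ∑ j ∈ Finset.range (ℓ + 1), m j)
    (hMub : ∀ A : ℝ, ∃ ℓ, A < (M ℓ : ℝ))
    (hn : ∀ ℓ, n ℓ = ∑ j ∈ Finset.range ℓ, (N * m j + 2 ^ j))
    -- probability space and i.i.d. contexts with regular covariance
    {Ω : Type*} [MeasurableSpace Ω] (P : Measure Ω) [IsProbabilityMeasure P]
    (D : Measure (EuclideanSpace ℝ (Fin d))) [IsProbabilityMeasure D]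
    (hDball : ∀ᵐ y ∂D, ‖y‖ ≤ 1)
    (hcovreg : ∀ v : EuclideanSpace ℝ (Fin d), σmin * ‖v‖ ^ 2 ≤ ∫ y, ⟪v, y⟫ ^ 2 ∂D)
    (x : ℕ → Ω → EuclideanSpace ℝ (Fin d))
    (hxmeas : ∀ t, Measurable (x t))
    (hiid : iIndepFun x P)
    (hlaw : ∀ t, P.map (x t) = D)
    -- true and estimated cache-aware rewards
    (μ : Fin N → Finset (Fin N) → EuclideanSpace ℝ (Fin d) → ℝ)
    (hμ : ∀ a S y, μ a S y = ⟪θstar a, y⟫ - α * lat a * (if a ∈ S then 0 else 1))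
    (θhat : Fin N → ℕ → Ω → EuclideanSpace ℝ (Fin d))  -- estimate of arm a at epoch ℓ
    (μhat : Fin N → Finset (Fin N) → ℕ → Ω → EuclideanSpace ℝ (Fin d) → ℝ)
    (hμhat : ∀ a S ℓ ω y, μhat a S ℓ ω y =
      ⟪θhat a ℓ ω, y⟫ - α * lat a * (if a ∈ S then 0 else 1))
    -- estimation error after the epoch-ℓ forced-exploration phase
    (hEst : ∀ ω (a : Fin N) (ℓ : ℕ),
      ‖θhat a ℓ ω - θstar a‖ ≤ βT / Real.sqrt (σmin * M ℓ / 2))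
    -- population cache utility, population-optimal cache, and empirical cache utility
    (F : Finset (Fin N) → ℝ)
    (hF : ∀ S, F S = ∫ y,
      (Finset.univ.sup' (Finset.univ_nonempty_iff.mpr ⟨⟨0, hN⟩⟩) fun a => μ a S y) ∂D)
    (Cdag : Finset (Fin N)) (hCdagcard : Cdag.card = K)
    (hCdagopt : ∀ S : Finset (Fin N), S.card = K → F S ≤ F Cdag)
    (Fhat : ℕ → Ω → Finset (Fin N) → ℝ)
    (hFhat : ∀ ℓ ω S, Fhat ℓ ω S = (1 / ((n ℓ + N * m ℓ : ℕ) : ℝ)) *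
      ∑ t ∈ Finset.range (n ℓ + N * m ℓ),
        (Finset.univ.sup' (Finset.univ_nonempty_iff.mpr ⟨⟨0, hN⟩⟩)
          fun a => μhat a S ℓ ω (x t ω)))
    -- cacheable diversity: hot set, cache separability, and hot dominance
    (Mhot : Finset (Fin N)) (hMhotne : Mhot.Nonempty) (hMhotcard : K ≤ Mhot.card)
    (hsep : ∀ S : Finset (Fin N), S.card ≤ K → ¬ S ⊆ Mhot → F S + Δcache ≤ F Cdag)
    (hΔcache : 0 < Δcache)
    (hcne : (Finset.univ \ Mhot).Nonempty)
    (hΔdom : Δdom = α * ((Finset.univ \ Mhot).inf' hcne lat) - 2)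
    (hΔdompos : 0 < Δdom)
    -- the POLAR+ cache: exact maximizer of the empirical cache utility
    (Cache : ℕ → Ω → Finset (Fin N))
    (hCachecard : ∀ ℓ ω, (Cache ℓ ω).card = K)
    (hCacheopt : ∀ ℓ ω (S : Finset (Fin N)), S.card = K → Fhat ℓ ω S ≤ Fhat ℓ ω (Cache ℓ ω)) :
    ∃ c : ℝ, 0 < c ∧ ∃ ℓcache : ℕ,
      c * βT ^ 2 / (σmin * (min Δcache Δdom) ^ 2) < (M ℓcache : ℝ) ∧
      ENNReal.ofReal (1 - δ) ≤
        P {ω | ∀ ℓ, ℓcache ≤ ℓ →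
          Cache ℓ ω ⊆ Mhot ∧
          ∀ S : Finset (Fin N), S ⊆ Mhot → S.card = K →
            ∀ y : EuclideanSpace ℝ (Fin d), ‖y‖ ≤ 1 →
              (Finset.univ.sup' (Finset.univ_nonempty_iff.mpr ⟨⟨0, hN⟩⟩)
                  fun a => μhat a S ℓ ω y) =
                (Mhot.sup' hMhotne fun a => μhat a S ℓ ω y)} := by
  classical
  have hune : (Finset.univ : Finset (Fin N)).Nonempty := Finset.univ_nonempty_iff.mpr ⟨⟨0, hN⟩⟩
  set Δ : ℝ := min Δcache Δdom with hΔdef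
  have hΔpos : 0 < Δ := lt_min hΔcache hΔdompos
  -- the population max-reward function and its basic properties
  set g : Finset (Fin N) → EuclideanSpace ℝ (Fin d) → ℝ :=
    fun S y => Finset.univ.sup' hune fun a => μ a S y with hgdef
  have hμmeas : ∀ (a : Fin N) (S : Finset (Fin N)),
      Measurable fun y : EuclideanSpace ℝ (Fin d) => μ a S y := by
    intro a S
    simp only [hμ]
    exact (Measurable.inner measurable_const measurable_id).sub measurable_const
  have hgmeas : ∀ S, Measurable (g S) := by
    intro S
    have h := Finset.measurable_sup' hune (fun a _ => hμmeas a S)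
    have : g S = Finset.univ.sup' hune fun a => (fun y => μ a S y) := by
      funext y
      rw [hgdef]
      exact (Finset.sup'_apply hune _ y).symm
    rw [this]
    exact h
  set B : ℝ := 1 + α * Finset.univ.sup' hune lat with hBdef
  have hlatB : ∀ a : Fin N, α * lat a ≤ B - 1 := by
    intro a
    have : lat a ≤ Finset.univ.sup' hune lat := Finset.le_sup' lat (mem_univ a)
    simp only [hBdef, add_sub_cancel_left]
    exact mul_le_mul_of_nonneg_left this hα.le
  have hBpos : 0 < B := by
    have h0 := hlat ⟨0, hN⟩
    have := hlatB ⟨0, hN⟩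
    nlinarith
  have hμbd : ∀ (a : Fin N) S y, ‖y‖ ≤ 1 → |μ a S y| ≤ B := by
    intro a S y hy
    rw [hμ]
    have h1 : |⟪θstar a, y⟫| ≤ 1 := by
      calc |⟪θstar a, y⟫| ≤ ‖θstar a‖ * ‖y‖ := abs_real_inner_le_norm _ _
        _ ≤ 1 * 1 := by
            apply mul_le_mul (hθ a) hy (norm_nonneg _) zero_le_one
        _ = 1 := by ring
    have h2 : |α * lat a * (if a ∈ S then 0 else 1)| ≤ B - 1 := by
      split_ifs
      · rw [mul_zero, abs_zero]
        nlinarith [hlatB a, hlat a]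
      · rw [mul_one, abs_of_pos (mul_pos hα (hlat a))]
        exact hlatB a
    calc |⟪θstar a, y⟫ - α * lat a * (if a ∈ S then 0 else 1)|
        ≤ |⟪θstar a, y⟫| + |α * lat a * (if a ∈ S then 0 else 1)| := abs_sub _ _
      _ ≤ 1 + (B - 1) := add_le_add h1 h2
      _ = B := by ring
  have hgB : ∀ S y, ‖y‖ ≤ 1 → |g S y| ≤ B := by
    intro S y hy
    rw [abs_le]
    constructor
    · have h := hμbd ⟨0, hN⟩ S y hy
      have h2 : μ ⟨0, hN⟩ S y ≤ g S y := Finset.le_sup' (fun a => μ a S y) (mem_univ ⟨0, hN⟩)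
      have := (abs_le.1 h).1
      linarith
    · apply Finset.sup'_le
      intro a _
      exact (abs_le.1 (hμbd a S y hy)).2
  -- per-round random variables
  have hYmeas : ∀ S t, Measurable fun ω => g S (x t ω) := fun S t => (hgmeas S).comp (hxmeas t)
  have hxball : ∀ t, ∀ᵐ ω ∂P, ‖x t ω‖ ≤ 1 := by
    intro t
    have h := hDball
    rw [← hlaw t] at h
    exact ae_of_ae_map (hxmeas t).aemeasurable h
  have hYbd : ∀ S t, ∀ᵐ ω ∂P, |g S (x t ω)| ≤ B := fun S t =>
    (hxball t).mono fun ω h => hgB S _ h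
  have hYL2 : ∀ S t, MemLp (fun ω => g S (x t ω)) 2 P := by
    intro S t
    refine (memLp_top_of_bound (hYmeas S t).aestronglyMeasurable B ?_).mono_exponent le_top
    simpa [Real.norm_eq_abs] using hYbd S t
  have hYint : ∀ S t, ∫ ω, g S (x t ω) ∂P = F S := by
    intro S t
    rw [← MeasureTheory.integral_map (hxmeas t).aemeasurable (hgmeas S).aestronglyMeasurable,
      hlaw t, hF S]
  -- the empirical sums (with the true μ)
  set W : Finset (Fin N) → ℕ → Ω → ℝ :=
    fun S ℓ ω => ∑ t ∈ Finset.range (n ℓ + N * m ℓ), g S (x t ω) with hWdef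
  have hWsum : ∀ S ℓ, W S ℓ = ∑ t ∈ Finset.range (n ℓ + N * m ℓ), (fun ω => g S (x t ω)) := by
    intro S ℓ
    funext ω
    rw [hWdef, Finset.sum_apply]
  have hWL2 : ∀ S ℓ, MemLp (W S ℓ) 2 P := by
    intro S ℓ
    rw [hWsum]
    exact memLp_finsetSum' _ fun t _ => hYL2 S t
  have hWmeas : ∀ S ℓ, Measurable (W S ℓ) := by
    intro S ℓ
    rw [hWdef]
    exact Finset.measurable_sum _ fun t _ => hYmeas S t
  have hWmean : ∀ S ℓ, ∫ ω, W S ℓ ω ∂P = ((n ℓ + N * m ℓ : ℕ) : ℝ) * F S := by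
    intro S ℓ
    rw [hWdef]
    simp only
    rw [integral_finset_sum _ fun t _ => (hYL2 S t).integrable one_le_two]
    simp [hYint, mul_comm]
  have hWvar : ∀ S ℓ, variance (W S ℓ) P ≤ ((n ℓ + N * m ℓ : ℕ) : ℝ) * B ^ 2 := by
    intro S ℓ
    have hind : iIndepFun (fun t ω => g S (x t ω)) P :=
      hiid.comp (fun _ => g S) (fun _ => hgmeas S)
    rw [hWsum]
    rw [IndepFun.variance_sum (fun t _ => hYL2 S t)
      (fun i _ j _ hij => hind.indepFun hij)]
    calc ∑ t ∈ Finset.range (n ℓ + N * m ℓ), variance (fun ω => g S (x t ω)) P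
        ≤ ∑ _t ∈ Finset.range (n ℓ + N * m ℓ), B ^ 2 :=
          Finset.sum_le_sum fun t _ => variance_le_sq_of_bound (hYL2 S t) (hYbd S t)
      _ = ((n ℓ + N * m ℓ : ℕ) : ℝ) * B ^ 2 := by simp [mul_comm]
  -- size of the epochs
  have hTlb : ∀ ℓ : ℕ, 2 ^ ℓ ≤ 2 * (n ℓ + N * m ℓ) + 1 := by
    intro ℓ
    have h1 : ∀ L : ℕ, 2 ^ L ≤ (∑ j ∈ Finset.range L, 2 ^ j) + 1 := by
      intro L
      induction L with
      | zero => simp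
      | succ L ih =>
        rw [Finset.sum_range_succ, pow_succ]
        omega
    have h2 : (∑ j ∈ Finset.range ℓ, 2 ^ j) ≤ n ℓ := by
      rw [hn ℓ]
      exact Finset.sum_le_sum fun j _ => Nat.le_add_left _ _
    have h3 : n ℓ ≤ n ℓ + N * m ℓ := Nat.le_add_right _ _
    have := h1 ℓ
    omega
  have hTpos : ∀ ℓ : ℕ, 1 ≤ ℓ → 0 < n ℓ + N * m ℓ := by
    intro ℓ hℓ
    have := hTlb ℓ
    have : 2 ≤ 2 ^ ℓ := by
      calc 2 = 2 ^ 1 := by norm_num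
        _ ≤ 2 ^ ℓ := Nat.pow_le_pow_right (by norm_num) hℓ
    omega
  -- Chebyshev bound for each epoch and cache
  set c0 : ℝ := 48 * B ^ 2 / Δcache ^ 2 with hc0def
  have hc0pos : 0 < c0 := by positivity
  have hcheb : ∀ ℓ : ℕ, 1 ≤ ℓ → ∀ S : Finset (Fin N),
      P {ω | Δcache / 4 * ((n ℓ + N * m ℓ : ℕ) : ℝ) ≤ |W S ℓ ω - ((n ℓ + N * m ℓ : ℕ) : ℝ) * F S|} ≤
        ENNReal.ofReal (c0 * (1 / 2) ^ ℓ) := by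
    intro ℓ hℓ S
    have hT0 : (0 : ℝ) < ((n ℓ + N * m ℓ : ℕ) : ℝ) := by exact_mod_cast hTpos ℓ hℓ
    have hc : (0 : ℝ) < Δcache / 4 * ((n ℓ + N * m ℓ : ℕ) : ℝ) := by positivity
    have hch := meas_ge_le_variance_div_sq (μ := P) (hWL2 S ℓ) hc
    rw [hWmean S ℓ] at hch
    refine le_trans hch (ENNReal.ofReal_le_ofReal ?_)
    have hp : (0 : ℝ) < 2 ^ ℓ := by positivity
    have hpT : (2 : ℝ) ^ ℓ ≤ 2 * ((n ℓ + N * m ℓ : ℕ) : ℝ) + 1 := by exact_mod_cast hTlb ℓ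
    have hT1 : (1 : ℝ) ≤ ((n ℓ + N * m ℓ : ℕ) : ℝ) := by exact_mod_cast hTpos ℓ hℓ
    have hpT' : (2 : ℝ) ^ ℓ ≤ 3 * ((n ℓ + N * m ℓ : ℕ) : ℝ) := by linarith
    have hq : ((1 : ℝ) / 2) ^ ℓ * 2 ^ ℓ = 1 := by
      rw [← mul_pow]; norm_num
    rw [div_le_iff₀ (by positivity)]
    have hvar := hWvar S ℓ
    calc variance (W S ℓ) P ≤ ((n ℓ + N * m ℓ : ℕ) : ℝ) * B ^ 2 := hvar
      _ ≤ c0 * (1 / 2) ^ ℓ * (Δcache / 4 * ((n ℓ + N * m ℓ : ℕ) : ℝ)) ^ 2 := by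
          rw [hc0def]
          have hq2 : (0:ℝ) < ((1:ℝ)/2) ^ ℓ := by positivity
          have key : (2:ℝ) ^ ℓ * ((1:ℝ)/2) ^ ℓ * ((n ℓ + N * m ℓ : ℕ) : ℝ) ≤
              3 * ((n ℓ + N * m ℓ : ℕ) : ℝ) * (((1:ℝ)/2) ^ ℓ * ((n ℓ + N * m ℓ : ℕ) : ℝ)) := by
            have := mul_le_mul_of_nonneg_right hpT' (le_of_lt (mul_pos hq2 hT0))
            calc (2:ℝ) ^ ℓ * ((1:ℝ)/2) ^ ℓ * ((n ℓ + N * m ℓ : ℕ) : ℝ)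
                = (2:ℝ) ^ ℓ * (((1:ℝ)/2) ^ ℓ * ((n ℓ + N * m ℓ : ℕ) : ℝ)) := by ring
              _ ≤ 3 * ((n ℓ + N * m ℓ : ℕ) : ℝ) * (((1:ℝ)/2) ^ ℓ * ((n ℓ + N * m ℓ : ℕ) : ℝ)) := this
          have key2 : ((n ℓ + N * m ℓ : ℕ) : ℝ) ≤ 3 * ((1:ℝ)/2) ^ ℓ * ((n ℓ + N * m ℓ : ℕ) : ℝ) ^ 2 := by
            have h1 : (2:ℝ) ^ ℓ * ((1:ℝ)/2) ^ ℓ = 1 := by rw [← mul_pow]; norm_num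
            nlinarith [key]
          have hB2 : (0:ℝ) ≤ B ^ 2 := sq_nonneg B
          calc ((n ℓ + N * m ℓ : ℕ) : ℝ) * B ^ 2 ≤ (3 * ((1:ℝ)/2) ^ ℓ * ((n ℓ + N * m ℓ : ℕ) : ℝ) ^ 2) * B ^ 2 :=
                mul_le_mul_of_nonneg_right key2 hB2
            _ = 48 * B ^ 2 / Δcache ^ 2 * (1 / 2) ^ ℓ * (Δcache / 4 * ((n ℓ + N * m ℓ : ℕ) : ℝ)) ^ 2 := by
                field_simp
                ring
  -- choice of the bootstrap epoch
  obtain ⟨ℓ₁, hℓ₁⟩ := hMub (128 * βT ^ 2 / (σmin * Δ ^ 2))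
  have hDcpos : (0:ℝ) < 2 ^ (N + 1) * c0 := by positivity
  obtain ⟨L₀, hL₀⟩ := exists_pow_lt_of_lt_one
    (show (0:ℝ) < δ / (2 ^ (N + 1) * c0) by positivity)
    (show (1:ℝ)/2 < 1 by norm_num)
  set ℓc : ℕ := max (max 1 L₀) ℓ₁ with hℓcdef
  have h1ℓc : 1 ≤ ℓc := le_trans (le_max_left 1 L₀) (le_max_left _ ℓ₁)
  have hL₀ℓc : L₀ ≤ ℓc := le_trans (le_max_right 1 L₀) (le_max_left _ ℓ₁)
  have hℓ₁ℓc : ℓ₁ ≤ ℓc := le_max_right _ ℓ₁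
  have hMmono : ∀ i j : ℕ, i ≤ j → M i ≤ M j := by
    intro i j h
    rw [hM i, hM j]
    exact Finset.sum_le_sum_of_subset (Finset.range_subset_range.2 (by omega))
  have hMbig : ∀ ℓ, ℓc ≤ ℓ → 128 * βT ^ 2 / (σmin * Δ ^ 2) < (M ℓ : ℝ) := by
    intro ℓ hℓ
    refine lt_of_lt_of_le hℓ₁ ?_
    exact_mod_cast hMmono ℓ₁ ℓ (le_trans hℓ₁ℓc hℓ)
  have hεbound : ∀ ℓ, ℓc ≤ ℓ → βT / Real.sqrt (σmin * (M ℓ : ℝ) / 2) ≤ Δ / 8 := by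
    intro ℓ hℓ
    have h := hMbig ℓ hℓ
    rw [div_lt_iff₀ (by positivity)] at h
    have h8 : (8 * βT / Δ) ^ 2 ≤ σmin * (M ℓ : ℝ) / 2 := by
      rw [div_pow, div_le_iff₀ (by positivity)]
      nlinarith
    have hs : 8 * βT / Δ ≤ Real.sqrt (σmin * (M ℓ : ℝ) / 2) := by
      rw [show (8 * βT / Δ : ℝ) = Real.sqrt ((8 * βT / Δ) ^ 2) from
        (Real.sqrt_sq (by positivity)).symm]
      exact Real.sqrt_le_sqrt h8
    have hspos : 0 < Real.sqrt (σmin * (M ℓ : ℝ) / 2) :=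
      lt_of_lt_of_le (by positivity) hs
    rw [div_le_iff₀ hspos]
    calc βT = Δ / 8 * (8 * βT / Δ) := by field_simp
      _ ≤ Δ / 8 * Real.sqrt (σmin * (M ℓ : ℝ) / 2) :=
          mul_le_mul_of_nonneg_left hs (by positivity)
  -- the bad event and its probability
  set Bad : Set Ω := ⋃ (k : ℕ), ⋃ (S : Finset (Fin N)),
    {ω | Δcache / 4 * ((n (ℓc + k) + N * m (ℓc + k) : ℕ) : ℝ) ≤
      |W S (ℓc + k) ω - ((n (ℓc + k) + N * m (ℓc + k) : ℕ) : ℝ) * F S|} with hBaddef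
  have hBadmeas : MeasurableSet Bad := by
    refine MeasurableSet.iUnion fun k => MeasurableSet.iUnion fun S => ?_
    exact measurableSet_le measurable_const ((hWmeas S _).sub measurable_const).abs
  have hBadP : P Bad ≤ ENNReal.ofReal δ := by
    have hstep : ∀ k : ℕ, P (⋃ (S : Finset (Fin N)),
        {ω | Δcache / 4 * ((n (ℓc + k) + N * m (ℓc + k) : ℕ) : ℝ) ≤
          |W S (ℓc + k) ω - ((n (ℓc + k) + N * m (ℓc + k) : ℕ) : ℝ) * F S|}) ≤
        ENNReal.ofReal ((2 ^ N * c0 * (1 / 2) ^ ℓc) * (1 / 2) ^ k) := by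
      intro k
      calc P _ ≤ ∑' S : Finset (Fin N), P
            {ω | Δcache / 4 * ((n (ℓc + k) + N * m (ℓc + k) : ℕ) : ℝ) ≤
              |W S (ℓc + k) ω - ((n (ℓc + k) + N * m (ℓc + k) : ℕ) : ℝ) * F S|} :=
            measure_iUnion_le _
        _ = ∑ S : Finset (Fin N), P
            {ω | Δcache / 4 * ((n (ℓc + k) + N * m (ℓc + k) : ℕ) : ℝ) ≤
              |W S (ℓc + k) ω - ((n (ℓc + k) + N * m (ℓc + k) : ℕ) : ℝ) * F S|} :=
            tsum_fintype _
        _ ≤ ∑ _S : Finset (Fin N), ENNReal.ofReal (c0 * (1 / 2) ^ (ℓc + k)) :=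
            Finset.sum_le_sum fun S _ => hcheb (ℓc + k) (le_trans h1ℓc (Nat.le_add_right _ _)) S
        _ = (Fintype.card (Finset (Fin N))) • ENNReal.ofReal (c0 * (1 / 2) ^ (ℓc + k)) := by
            rw [Finset.sum_const, Finset.card_univ]
        _ = ENNReal.ofReal ((2 ^ N * c0 * (1 / 2) ^ ℓc) * (1 / 2) ^ k) := by
            rw [nsmul_eq_mul]
            rw [← ENNReal.ofReal_natCast, ← ENNReal.ofReal_mul (by positivity)]
            congr 1
            rw [Fintype.card_finset, Fintype.card_fin]
            push_cast
            rw [pow_add]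
            ring
    have hsummable : Summable fun k : ℕ => (2 ^ N * c0 * (1 / 2) ^ ℓc) * (1 / 2) ^ k :=
      (summable_geometric_of_lt_one (by norm_num) (by norm_num)).mul_left _
    calc P Bad ≤ ∑' k : ℕ, P (⋃ (S : Finset (Fin N)),
          {ω | Δcache / 4 * ((n (ℓc + k) + N * m (ℓc + k) : ℕ) : ℝ) ≤
            |W S (ℓc + k) ω - ((n (ℓc + k) + N * m (ℓc + k) : ℕ) : ℝ) * F S|}) := by
          rw [hBaddef]
          exact measure_iUnion_le _
      _ ≤ ∑' k : ℕ, ENNReal.ofReal ((2 ^ N * c0 * (1 / 2) ^ ℓc) * (1 / 2) ^ k) :=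
          ENNReal.tsum_le_tsum hstep
      _ = ENNReal.ofReal (∑' k : ℕ, (2 ^ N * c0 * (1 / 2) ^ ℓc) * (1 / 2) ^ k) :=
          (ENNReal.ofReal_tsum_of_nonneg (fun k => by positivity) hsummable).symm
      _ ≤ ENNReal.ofReal δ := by
          apply ENNReal.ofReal_le_ofReal
          rw [tsum_mul_left, tsum_geometric_of_lt_one (by norm_num) (by norm_num)]
          have hmono : ((1:ℝ) / 2) ^ ℓc ≤ (1 / 2) ^ L₀ :=
            pow_le_pow_of_le_one (by norm_num) (by norm_num) hL₀ℓc
          have hfin : ((1:ℝ) - 1/2)⁻¹ = 2 := by norm_num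
          rw [hfin]
          have : (2:ℝ) ^ N * c0 * (1 / 2) ^ ℓc * 2 ≤ 2 ^ N * c0 * (1 / 2) ^ L₀ * 2 := by
            have h2 : (0:ℝ) ≤ 2 ^ N * c0 := by positivity
            nlinarith
          have h3 : (2:ℝ) ^ N * c0 * (1 / 2) ^ L₀ * 2 < δ := by
            have := mul_lt_mul_of_pos_left hL₀ hDcpos
            calc (2:ℝ) ^ N * c0 * (1 / 2) ^ L₀ * 2
                = 2 ^ (N + 1) * c0 * (1 / 2) ^ L₀ := by ring
              _ < 2 ^ (N + 1) * c0 * (δ / (2 ^ (N + 1) * c0)) := this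
              _ = δ := by field_simp
          linarith
  -- the deterministic consequence on the good event
  have hdet : ∀ ω : Ω, (∀ t, ‖x t ω‖ ≤ 1) →
      ∀ ℓ, ℓc ≤ ℓ →
      (∀ S : Finset (Fin N), |W S ℓ ω - ((n ℓ + N * m ℓ : ℕ) : ℝ) * F S| <
        Δcache / 4 * ((n ℓ + N * m ℓ : ℕ) : ℝ)) →
      Cache ℓ ω ⊆ Mhot ∧ (∀ S : Finset (Fin N), S ⊆ Mhot → S.card = K →
        ∀ y : EuclideanSpace ℝ (Fin d), ‖y‖ ≤ 1 →
          (Finset.univ.sup' hune fun a => μhat a S ℓ ω y) =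
            (Mhot.sup' hMhotne fun a => μhat a S ℓ ω y)) := by
    intro ω hball ℓ hℓ hconc
    set ε : ℝ := βT / Real.sqrt (σmin * (M ℓ : ℝ) / 2) with hεdef
    have hεnn : 0 ≤ ε := by positivity
    have hεle : ε ≤ Δ / 8 := hεbound ℓ hℓ
    have hΔc : Δ ≤ Δcache := by rw [hΔdef]; exact min_le_left _ _
    have hΔd : Δ ≤ Δdom := by rw [hΔdef]; exact min_le_right _ _
    have hεcache : ε ≤ Δcache / 8 := by linarith
    have hεdom : 2 * ε ≤ Δdom := by linarith
    have hinner : ∀ a : Fin N, ∀ y : EuclideanSpace ℝ (Fin d), ‖y‖ ≤ 1 →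
        |⟪θhat a ℓ ω, y⟫| ≤ 1 + ε := by
      intro a y hy
      have h2 := hEst ω a ℓ
      have h3 : ‖θhat a ℓ ω‖ - ‖θstar a‖ ≤ ‖θhat a ℓ ω - θstar a‖ := norm_sub_norm_le _ _
      have h4 := hθ a
      have h1 : ‖θhat a ℓ ω‖ ≤ 1 + ε := by rw [hεdef]; linarith
      calc |⟪θhat a ℓ ω, y⟫| ≤ ‖θhat a ℓ ω‖ * ‖y‖ := abs_real_inner_le_norm _ _
        _ ≤ (1 + ε) * 1 := mul_le_mul h1 hy (norm_nonneg _) (by positivity)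
        _ = 1 + ε := mul_one _
    have hdiff : ∀ (a : Fin N) (S : Finset (Fin N)) (y : EuclideanSpace ℝ (Fin d)), ‖y‖ ≤ 1 →
        |μhat a S ℓ ω y - μ a S y| ≤ ε := by
      intro a S y hy
      have heq : μhat a S ℓ ω y - μ a S y = ⟪θhat a ℓ ω - θstar a, y⟫ := by
        rw [hμhat, hμ, inner_sub_left]; ring
      rw [heq]
      calc |⟪θhat a ℓ ω - θstar a, y⟫| ≤ ‖θhat a ℓ ω - θstar a‖ * ‖y‖ :=
            abs_real_inner_le_norm _ _
        _ ≤ ε * 1 := mul_le_mul (by rw [hεdef]; exact hEst ω a ℓ) hy (norm_nonneg _) hεnn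
        _ = ε := mul_one _
    constructor
    · -- (i): the selected cache is hot
      by_contra hC
      have hTr : (0:ℝ) < ((n ℓ + N * m ℓ : ℕ) : ℝ) := by
        exact_mod_cast hTpos ℓ (le_trans h1ℓc hℓ)
      have hclose : ∀ S : Finset (Fin N),
          |Fhat ℓ ω S - 1 / ((n ℓ + N * m ℓ : ℕ) : ℝ) * W S ℓ ω| ≤ ε := by
        intro S
        rw [hFhat, hWdef]
        simp only
        rw [← mul_sub, abs_mul,
          abs_of_pos (by positivity : (0:ℝ) < 1 / ((n ℓ + N * m ℓ : ℕ) : ℝ))]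
        have hterm : ∀ t ∈ Finset.range (n ℓ + N * m ℓ),
            |(Finset.univ.sup' (Finset.univ_nonempty_iff.mpr ⟨⟨0, hN⟩⟩)
                fun a => μhat a S ℓ ω (x t ω)) - g S (x t ω)| ≤ ε := by
          intro t _
          rw [hgdef]
          exact abs_sup'_sub_sup'_le _ _ _ (fun a _ => hdiff a S (x t ω) (hball t))
        calc 1 / ((n ℓ + N * m ℓ : ℕ) : ℝ) *
              |(∑ t ∈ Finset.range (n ℓ + N * m ℓ),
                  (Finset.univ.sup' (Finset.univ_nonempty_iff.mpr ⟨⟨0, hN⟩⟩)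
                    fun a => μhat a S ℓ ω (x t ω))) -
                ∑ t ∈ Finset.range (n ℓ + N * m ℓ), g S (x t ω)|
            ≤ 1 / ((n ℓ + N * m ℓ : ℕ) : ℝ) * (((n ℓ + N * m ℓ : ℕ) : ℝ) * ε) := by
              apply mul_le_mul_of_nonneg_left _ (by positivity)
              rw [← Finset.sum_sub_distrib]
              calc |∑ t ∈ Finset.range (n ℓ + N * m ℓ),
                    ((Finset.univ.sup' (Finset.univ_nonempty_iff.mpr ⟨⟨0, hN⟩⟩)
                        fun a => μhat a S ℓ ω (x t ω)) - g S (x t ω))|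
                  ≤ ∑ t ∈ Finset.range (n ℓ + N * m ℓ),
                    |(Finset.univ.sup' (Finset.univ_nonempty_iff.mpr ⟨⟨0, hN⟩⟩)
                        fun a => μhat a S ℓ ω (x t ω)) - g S (x t ω)| :=
                    Finset.abs_sum_le_sum_abs _ _
                _ ≤ ∑ _t ∈ Finset.range (n ℓ + N * m ℓ), ε := Finset.sum_le_sum hterm
                _ = ((n ℓ + N * m ℓ : ℕ) : ℝ) * ε := by
                    rw [Finset.sum_const, Finset.card_range, nsmul_eq_mul]
          _ = ε := by rw [one_div, inv_mul_cancel_left₀ hTr.ne']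
      have hWc : ∀ S : Finset (Fin N),
          |1 / ((n ℓ + N * m ℓ : ℕ) : ℝ) * W S ℓ ω - F S| < Δcache / 4 := by
        intro S
        have h := hconc S
        have heq : 1 / ((n ℓ + N * m ℓ : ℕ) : ℝ) * W S ℓ ω - F S =
            1 / ((n ℓ + N * m ℓ : ℕ) : ℝ) * (W S ℓ ω - ((n ℓ + N * m ℓ : ℕ) : ℝ) * F S) := by
          rw [mul_sub, one_div, inv_mul_cancel_left₀ hTr.ne']
        rw [heq, abs_mul,
          abs_of_pos (by positivity : (0:ℝ) < 1 / ((n ℓ + N * m ℓ : ℕ) : ℝ))]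
        calc 1 / ((n ℓ + N * m ℓ : ℕ) : ℝ) * |W S ℓ ω - ((n ℓ + N * m ℓ : ℕ) : ℝ) * F S|
            < 1 / ((n ℓ + N * m ℓ : ℕ) : ℝ) * (Δcache / 4 * ((n ℓ + N * m ℓ : ℕ) : ℝ)) :=
              mul_lt_mul_of_pos_left h (by positivity)
          _ = Δcache / 4 := by
              rw [one_div, mul_comm (Δcache / 4), inv_mul_cancel_left₀ hTr.ne']
      have hCd := hclose Cdag
      have hCc := hclose (Cache ℓ ω)
      have hWd := hWc Cdag
      have hWcC := hWc (Cache ℓ ω)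
      have hgap := hsep (Cache ℓ ω) (le_of_eq (hCachecard ℓ ω)) hC
      have hopt := hCacheopt ℓ ω Cdag hCdagcard
      have h1 := (abs_le.1 hCd).1
      have h2 := (abs_le.1 hCc).2
      have h3 := (abs_lt.1 hWd).1
      have h4 := (abs_lt.1 hWcC).2
      linarith
    · -- (ii): hot arms dominate
      intro S hS hScard y hy
      obtain ⟨a₀, ha₀⟩ := Finset.card_pos.1 (show 0 < S.card by omega)
      have ha₀hot : a₀ ∈ Mhot := hS ha₀
      apply le_antisymm
      · apply Finset.sup'_le
        intro a _
        by_cases ha : a ∈ Mhot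
        · exact Finset.le_sup' (fun a => μhat a S ℓ ω y) ha
        · have haS : a ∉ S := fun h => ha (hS h)
          have hlat' : (Finset.univ \ Mhot).inf' hcne lat ≤ lat a :=
            Finset.inf'_le lat (by simp [Finset.mem_sdiff, ha])
          have hαlat : Δdom + 2 ≤ α * lat a := by
            have := mul_le_mul_of_nonneg_left hlat' hα.le
            rw [hΔdom]
            linarith
          have hub : μhat a S ℓ ω y ≤ -(1 + ε) := by
            rw [hμhat, if_neg haS, mul_one]
            have := (abs_le.1 (hinner a y hy)).2
            linarith
          have hlb : -(1 + ε) ≤ μhat a₀ S ℓ ω y := by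
            rw [hμhat, if_pos ha₀, mul_zero, sub_zero]
            linarith [(abs_le.1 (hinner a₀ y hy)).1]
          exact le_trans (le_trans hub hlb)
            (Finset.le_sup' (fun a => μhat a S ℓ ω y) ha₀hot)
      · exact Finset.sup'_le _ _ fun a _ =>
          Finset.le_sup' (fun a => μhat a S ℓ ω y) (mem_univ a)
  -- conclusion
  refine ⟨128, by norm_num, ℓc, hMbig ℓc le_rfl, ?_⟩
  set Ball : Set Ω := ⋂ t : ℕ, {ω | ‖x t ω‖ ≤ 1} with hBalldef
  have hBallmeas : MeasurableSet Ball :=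
    MeasurableSet.iInter fun t => measurableSet_le (hxmeas t).norm measurable_const
  have hBallc : P Ballᶜ = 0 := by
    rw [hBalldef, Set.compl_iInter]
    apply measure_iUnion_null
    intro t
    have h := hxball t
    rw [MeasureTheory.ae_iff] at h
    simpa [Set.compl_setOf] using h
  set Z : Set Ω := Ballᶜ ∪ Bad with hZdef
  have hZmeas : MeasurableSet Z := hBallmeas.compl.union hBadmeas
  have hZP : P Z ≤ ENNReal.ofReal δ := by
    refine le_trans (measure_union_le _ _) ?_
    rw [hBallc, zero_add]
    exact hBadP
  have hsub : Zᶜ ⊆ {ω | ∀ ℓ, ℓc ≤ ℓ →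
      Cache ℓ ω ⊆ Mhot ∧
      ∀ S : Finset (Fin N), S ⊆ Mhot → S.card = K →
        ∀ y : EuclideanSpace ℝ (Fin d), ‖y‖ ≤ 1 →
          (Finset.univ.sup' (Finset.univ_nonempty_iff.mpr ⟨⟨0, hN⟩⟩)
              fun a => μhat a S ℓ ω y) =
            (Mhot.sup' hMhotne fun a => μhat a S ℓ ω y)} := by
    intro ω hω
    rw [hZdef, Set.compl_union, compl_compl] at hω
    obtain ⟨hω1, hω2⟩ := hω
    have hball : ∀ t, ‖x t ω‖ ≤ 1 := fun t => Set.mem_iInter.1 hω1 t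
    intro ℓ hℓ
    have hconc : ∀ S : Finset (Fin N),
        |W S ℓ ω - ((n ℓ + N * m ℓ : ℕ) : ℝ) * F S| <
          Δcache / 4 * ((n ℓ + N * m ℓ : ℕ) : ℝ) := by
      intro S
      rw [hBaddef] at hω2
      simp only [Set.mem_compl_iff, Set.mem_iUnion, not_exists, Set.mem_setOf_eq] at hω2
      have h := hω2 (ℓ - ℓc) S
      rw [show ℓc + (ℓ - ℓc) = ℓ by omega] at h
      exact lt_of_not_ge h
    exact hdet ω hball ℓ hℓ hconc
  calc ENNReal.ofReal (1 - δ) = 1 - ENNReal.ofReal δ := by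
        rw [ENNReal.ofReal_sub _ hδ.le, ENNReal.ofReal_one]
    _ ≤ 1 - P Z := tsub_le_tsub_left hZP 1
    _ = P Zᶜ := by rw [measure_compl hZmeas (measure_ne_top P Z), measure_univ]
    _ ≤ _ := measure_mono hsub
end

section
/- Let x_1,…,x_t ∈ R^d satisfy ‖x_s‖₂ ≤ 1 for all s, and let λ > 0. Then the determinant of V := λ·I_d + Σ_{s=1}^t x_s x_s^T satisfies det(V) ≤ (λ + t/d)^d; equivalently, det(V)/det(λ·I_d) ≤ (1 + t/(dλ))^d. -/
open Finset

/-- **Log-determinant (AM–GM) bound for the regularized design matrix.**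
If `‖x_s‖₂ ≤ 1` for all `s` and `V = λ I_d + Σ_s x_s x_sᵀ`, then
`det V ≤ (λ + t/d)^d`, equivalently `det V / det (λ I_d) ≤ (1 + t/(dλ))^d`. -/
theorem design_matrix_det_bound (d t : ℕ) (hd : 0 < d) (lam : ℝ) (hlam : 0 < lam)
    (x : Fin t → EuclideanSpace ℝ (Fin d)) (hx : ∀ s, ‖x s‖ ≤ 1)
    (V : Matrix (Fin d) (Fin d) ℝ)
    (hV : V = lam • (1 : Matrix (Fin d) (Fin d) ℝ) +
      ∑ s : Fin t, Matrix.vecMulVec (x s) (x s)) :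
    V.det ≤ (lam + t / d) ^ d ∧
      V.det / (lam • (1 : Matrix (Fin d) (Fin d) ℝ)).det ≤ (1 + t / (d * lam)) ^ d := by
  classical
  have hd' : (0:ℝ) < d := by exact_mod_cast hd
  -- positive semidefiniteness
  have hterm : ∀ s : Fin t, (Matrix.vecMulVec (x s : Fin d → ℝ) (x s)).PosSemidef := by
    intro s
    rw [Matrix.vecMulVec_eq Unit]
    simpa using Matrix.posSemidef_self_mul_conjTranspose (Matrix.replicateCol Unit (x s : Fin d → ℝ))
  have hS : (∑ s : Fin t, Matrix.vecMulVec (x s : Fin d → ℝ) (x s)).PosSemidef := by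
    refine Finset.sum_induction _ _ (fun a b ha hb => ha.add hb) Matrix.PosSemidef.zero
      (fun s _ => hterm s)
  have hI : (lam • (1 : Matrix (Fin d) (Fin d) ℝ)).PosSemidef := by
    rw [Matrix.smul_one_eq_diagonal]
    exact Matrix.posSemidef_diagonal_iff.mpr fun _ => hlam.le
  have hVpsd : V.PosSemidef := hV ▸ hI.add hS
  have hH : V.IsHermitian := hVpsd.isHermitian
  set μ : Fin d → ℝ := hH.eigenvalues with hμ
  have hnonneg : ∀ i, 0 ≤ μ i := fun i => hVpsd.eigenvalues_nonneg i
  -- trace = sum of eigenvalues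
  have htr : V.trace = ∑ i, μ i := by
    simpa [hμ] using hH.trace_eq_sum_eigenvalues
  -- det = product of eigenvalues
  have hdet : V.det = ∏ i, μ i := by simpa using hH.det_eq_prod_eigenvalues
  -- trace bound
  have htrb : V.trace ≤ d * lam + t := by
    rw [hV, Matrix.trace_add, Matrix.trace_smul, Matrix.trace_one, Matrix.trace_sum]
    have h1 : ∀ s : Fin t, (Matrix.vecMulVec (x s : Fin d → ℝ) (x s)).trace ≤ 1 := by
      intro s
      have hn : (Matrix.vecMulVec (x s : Fin d → ℝ) (x s)).trace = ‖x s‖^2 := by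
        rw [EuclideanSpace.norm_eq, Real.sq_sqrt (by positivity)]
        simp [Matrix.trace, Matrix.diag, Matrix.vecMulVec_apply, sq]
      rw [hn]
      nlinarith [hx s, norm_nonneg (x s)]
    have h2 : ∑ s : Fin t, (Matrix.vecMulVec (x s : Fin d → ℝ) (x s)).trace ≤ t := by
      calc ∑ s : Fin t, (Matrix.vecMulVec (x s : Fin d → ℝ) (x s)).trace
          ≤ ∑ _s : Fin t, (1:ℝ) := Finset.sum_le_sum fun s _ => h1 s
        _ = t := by simp
    simp only [smul_eq_mul, Finset.card_univ, Fintype.card_fin]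
    have : lam * d = d * lam := mul_comm _ _
    nlinarith [h2]
  have hsum : ∑ i, μ i ≤ d * lam + t := htr ▸ htrb
  have hsumnn : 0 ≤ ∑ i, μ i := Finset.sum_nonneg fun i _ => hnonneg i
  -- AM-GM
  have geom : ∏ i, μ i ^ ((d:ℝ)⁻¹) ≤ ∑ i, (d:ℝ)⁻¹ * μ i :=
    Real.geom_mean_le_arith_mean_weighted Finset.univ (fun _ => (d:ℝ)⁻¹) μ
      (fun _ _ => by positivity)
      (by simp [Finset.card_univ]; field_simp)
      (fun i _ => hnonneg i)
  have key : ∏ i, μ i ≤ ((d * lam + t) / d) ^ d := by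
    calc ∏ i, μ i = (∏ i, μ i ^ ((d:ℝ)⁻¹)) ^ d := by
          rw [← Finset.prod_pow]
          refine Finset.prod_congr rfl fun i _ => ?_
          rw [← Real.rpow_natCast (μ i ^ ((d:ℝ)⁻¹)) d, ← Real.rpow_mul (hnonneg i),
            inv_mul_cancel₀ (ne_of_gt hd'), Real.rpow_one]
      _ ≤ (∑ i, (d:ℝ)⁻¹ * μ i) ^ d := by
          refine pow_le_pow_left₀ (Finset.prod_nonneg fun i _ => ?_) geom d
          exact Real.rpow_nonneg (hnonneg i) _
      _ = ((∑ i, μ i) / d) ^ d := by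
          rw [← Finset.mul_sum]; rw [div_eq_inv_mul]
      _ ≤ ((d * lam + t) / d) ^ d := by
          refine pow_le_pow_left₀ (by positivity) ?_ d
          exact div_le_div_of_nonneg_right hsum hd'.le |>.trans_eq rfl
  have heq : (d * lam + t) / d = lam + t / d := by field_simp
  have main : V.det ≤ (lam + t / d) ^ d := by
    rw [hdet, ← heq]; exact key
  refine ⟨main, ?_⟩
  have hdetI : (lam • (1 : Matrix (Fin d) (Fin d) ℝ)).det = lam ^ d := by
    simp [Matrix.det_smul]
  rw [hdetI]
  have hpow : (0:ℝ) < lam ^ d := pow_pos hlam d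
  calc V.det / lam ^ d ≤ (lam + t / d) ^ d / lam ^ d := by
        exact div_le_div_of_nonneg_right main hpow.le |>.trans_eq rfl
    _ = (1 + t / (d * lam)) ^ d := by
        rw [← div_pow]
        congr 1
        field_simp
end

section
/- Let M be a finite set of arms with a subset M_hot ⊆ M, parameters θ_a^* with ‖θ_a^*‖₂ ≤ 1, estimates θ̂_a, penalties λ_a > 0, weight α > 0, and suppose α·min_{a∉M_hot} λ_a > 2; set Δ_dom := α·min_{a∉M_hot} λ_a − 2 > 0. Fix any nonempty S ⊆ M_hot and any x with ‖x‖₂ ≤ 1, and write μ(a;S;x) := ⟨θ_a^*, x⟩ − α·λ_a·1{a∉S}, μ̂(a;S;x) := ⟨θ̂_a, x⟩ − α·λ_a·1{a∉S}. Then: (i) max_{a∈S} μ(a;S;x) ≥ −1 while μ(a';S;x) ≤ −1 − Δ_dom for every a' ∉ M_hot; and (ii) if max_{a∈M} ‖θ̂_a − θ_a^*‖₂ ≤ ε with 2ε < Δ_dom, then max_{a∈M} μ̂(a;S;x) = max_{a∈M_hot} μ̂(a;S;x), i.e., the estimated maximum is attained by a hot arm. -/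
open Finset
open scoped RealInnerProductSpace

/-- **Hot-dominance separation.**
Suppose `‖θ_a^*‖ ≤ 1`, penalties `λ_a > 0`, weight `α > 0` and
`α · min_{a ∉ M_hot} λ_a > 2`, with `Δ_dom := α · min_{a ∉ M_hot} λ_a − 2 > 0`.
For any nonempty `S ⊆ M_hot` and any `‖x‖ ≤ 1`:
(i) `max_{a ∈ S} μ(a;S;x) ≥ −1` while `μ(a';S;x) ≤ −1 − Δ_dom` for all `a' ∉ M_hot`; and
(ii) if all estimation errors are at most `ε` with `2ε < Δ_dom`, the estimated maximum
over all arms is attained on `M_hot`. -/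
theorem hot_dominance_separation {A : Type*} [Fintype A] [Nonempty A] [DecidableEq A] {d : ℕ}
    (Mhot : Finset A) (hcne : (Finset.univ \ Mhot).Nonempty)
    (θ θhat : A → EuclideanSpace ℝ (Fin d)) (hθ : ∀ a, ‖θ a‖ ≤ 1)
    (lat : A → ℝ) (hlat : ∀ a, 0 < lat a) (α : ℝ) (hα : 0 < α)
    (Δdom : ℝ) (hΔdef : Δdom = α * ((Finset.univ \ Mhot).inf' hcne lat) - 2)
    (hΔpos : 0 < Δdom)
    (S : Finset A) (hSne : S.Nonempty) (hShot : S ⊆ Mhot)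
    (x : EuclideanSpace ℝ (Fin d)) (hx : ‖x‖ ≤ 1)
    (μ μhat : A → Finset A → ℝ)
    (hμ : ∀ a C, μ a C = ⟪θ a, x⟫ - α * lat a * (if a ∈ C then 0 else 1))
    (hμhat : ∀ a C, μhat a C = ⟪θhat a, x⟫ - α * lat a * (if a ∈ C then 0 else 1)) :
    (-1 ≤ S.sup' hSne fun a => μ a S) ∧
      (∀ a' ∉ Mhot, μ a' S ≤ -1 - Δdom) ∧
      (∀ ε : ℝ, (∀ a, ‖θhat a - θ a‖ ≤ ε) → 2 * ε < Δdom →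
        (Finset.univ.sup' Finset.univ_nonempty fun a => μhat a S) =
          Mhot.sup' (hSne.mono hShot) fun a => μhat a S) := by

  have hinner : ∀ θ' : EuclideanSpace ℝ (Fin d), ‖θ'‖ ≤ 1 → |⟪θ', x⟫| ≤ 1 := by
    intro θ' h
    calc |⟪θ', x⟫| ≤ ‖θ'‖ * ‖x‖ := abs_real_inner_le_norm _ _
    _ ≤ 1 * 1 := by
        apply mul_le_mul h hx (norm_nonneg _) zero_le_one
    _ = 1 := one_mul 1
  -- part (ii) bound
  have hcold : ∀ a' ∉ Mhot, μ a' S ≤ -1 - Δdom := by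
    intro a' ha'
    have hmem : a' ∈ Finset.univ \ Mhot := by simp [ha']
    have hinf : (Finset.univ \ Mhot).inf' hcne lat ≤ lat a' := Finset.inf'_le _ hmem
    have hαinf : α * ((Finset.univ \ Mhot).inf' hcne lat) ≤ α * lat a' :=
      mul_le_mul_of_nonneg_left hinf hα.le
    have hnotS : a' ∉ S := fun h => ha' (hShot h)
    rw [hμ]
    simp only [hnotS, if_neg, ite_false, mul_one]
    have h1 : ⟪θ a', x⟫ ≤ 1 := (abs_le.1 (hinner _ (hθ a'))).2
    linarith [hΔdef ▸ hΔpos]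
  refine ⟨?_, hcold, ?_⟩
  · obtain ⟨a0, ha0⟩ := hSne
    have : -1 ≤ μ a0 S := by
      rw [hμ]
      simp only [ha0, if_pos, ite_true, mul_zero, sub_zero]
      exact (abs_le.1 (hinner _ (hθ a0))).1
    exact le_trans this (Finset.le_sup' (fun a => μ a S) ha0)
  · intro ε hε h2ε
    have hdiff : ∀ a, |⟪θhat a, x⟫ - ⟪θ a, x⟫| ≤ ε := by
      intro a
      have : ⟪θhat a, x⟫ - ⟪θ a, x⟫ = ⟪θhat a - θ a, x⟫ := by
        rw [inner_sub_left]
      rw [this]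
      calc |⟪θhat a - θ a, x⟫| ≤ ‖θhat a - θ a‖ * ‖x‖ := abs_real_inner_le_norm _ _
      _ ≤ ε * 1 := by
          apply mul_le_mul (hε a) hx (norm_nonneg _) (le_trans (norm_nonneg _) (hε a))
      _ = ε := mul_one ε
    have hεnn : 0 ≤ ε := le_trans (norm_nonneg _) (hε Classical.ofNonempty)
    obtain ⟨a0, ha0⟩ := hSne
    have ha0hot : a0 ∈ Mhot := hShot ha0
    have hlb : -1 - ε ≤ μhat a0 S := by
      rw [hμhat]
      simp only [ha0, if_pos, ite_true, mul_zero, sub_zero]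
      have h1 := (abs_le.1 (hinner _ (hθ a0))).1
      have h2 := (abs_le.1 (hdiff a0)).1
      linarith
    apply le_antisymm
    · rw [Finset.sup'_le_iff]
      intro a _
      by_cases ha : a ∈ Mhot
      · exact Finset.le_sup' (fun a => μhat a S) ha
      · have h1 := hcold a ha
        have h2 := (abs_le.1 (hdiff a)).2
        have h3 : μhat a S ≤ μ a S + ε := by
          rw [hμ, hμhat] at *
          linarith
        have : μhat a S ≤ -1 - ε := by linarith
        exact le_trans this (le_trans hlb (Finset.le_sup' (fun a => μhat a S) ha0hot))
    · apply Finset.sup'_le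
      intro a _
      exact Finset.le_sup' (fun a => μhat a S) (Finset.mem_univ a)
end
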